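/- arXiv:math/0111021 — 4 statements merged into one kernel-verified Lean document; each statement's English description precedes it below -/
import Mathlib

section
/- Let (X,Y) have a differentiable joint density on ℝ² with finite J_XX, J_YY, J_XY, and let W = X+Y have a differentiable density with finite Fisher information J(X+Y). Then for every pair of real numbers a, b: (a+b)² J(X+Y) ≤ a² J_XX + 2ab J_XY + b² J_YY; this follows because E[(a ρ⁽¹⁾(X,Y) + b ρ⁽²⁾(X,Y) − (a+b) ρ_W(X+Y))²] = a² J_XX + 2ab J_XY + b² J_YY − (a+b)² J(X+Y) ≥ 0. -/
open MeasureTheory Real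

/-- `ρ⁽¹⁾(x,y) = (∂p/∂x)(x,y) / p(x,y)`. -/
noncomputable def score1 (p : ℝ × ℝ → ℝ) (z : ℝ × ℝ) : ℝ :=
  deriv (fun x => p (x, z.2)) z.1 / p z

/-- `ρ⁽²⁾(x,y) = (∂p/∂y)(x,y) / p(x,y)`. -/
noncomputable def score2 (p : ℝ × ℝ → ℝ) (z : ℝ × ℝ) : ℝ :=
  deriv (fun y => p (z.1, y)) z.2 / p z

/-- `J_XX = E[ρ⁽¹⁾(X,Y)²]`. -/
noncomputable def Jxx (p : ℝ × ℝ → ℝ) : ℝ := ∫ z, p z * (score1 p z) ^ 2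

/-- `J_YY = E[ρ⁽²⁾(X,Y)²]`. -/
noncomputable def Jyy (p : ℝ × ℝ → ℝ) : ℝ := ∫ z, p z * (score2 p z) ^ 2

/-- `J_XY = E[ρ⁽¹⁾(X,Y) ρ⁽²⁾(X,Y)]`. -/
noncomputable def Jxy (p : ℝ × ℝ → ℝ) : ℝ := ∫ z, p z * (score1 p z * score2 p z)

/-- Density of `W = X + Y`: `p_W(w) = ∫ p(x, w-x) dx`. -/
noncomputable def sumDensity (p : ℝ × ℝ → ℝ) (w : ℝ) : ℝ := ∫ x, p (x, w - x)

/-- Score of the sum: `ρ_W = p_W'/p_W`. -/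
noncomputable def scoreW (p : ℝ × ℝ → ℝ) (w : ℝ) : ℝ :=
  deriv (sumDensity p) w / sumDensity p w

/-- `J(X+Y) = E[ρ_W(W)²]`. -/
noncomputable def Jsum (p : ℝ × ℝ → ℝ) : ℝ := ∫ w, sumDensity p w * (scoreW p w) ^ 2

/-- `p` is a joint probability density on `ℝ²`. -/
def IsJointDensity (p : ℝ × ℝ → ℝ) : Prop :=
  Measurable p ∧ (∀ z, 0 ≤ p z) ∧ (∫ z, p z) = 1

/-!
Write `∂₁p = p ρ⁽¹⁾`, `∂₂p = p ρ⁽²⁾` and `p_W' = p_W ρ_W`; these hold also where the densities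
vanish, because a nonnegative differentiable function has zero derivative at its zeros. Expanding
the square, the identity reduces to `E[ρ⁽ⁱ⁾(X,Y) ρ_W(X+Y)] = J(X+Y)` for `i = 1, 2`. The shear
`(x, w) ↦ (x, w - x)` turns this expectation into `∫ (∫ ∂ᵢp(x, w - x) dx) ρ_W(w) dw`, and the inner
integral is `p_W'(w)` for almost every `w`: integrating `∂₂p` along the antidiagonals and using
Fubini shows that `p_W` is a primitive of `w ↦ ∫ ∂₂p(x, w - x) dx`, so the Lebesgue
differentiation theorem identifies the two; the case `i = 1` follows by swapping coordinates.
The inequality is the nonnegativity of the left-hand side of the identity.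
-/

open Filter Topology

noncomputable def partialSnd {α : Type*} (f : α × ℝ → ℝ) (z : α × ℝ) : ℝ :=
  deriv (fun y => f (z.1, y)) z.2

noncomputable def partialFst {β : Type*} (f : ℝ × β → ℝ) (z : ℝ × β) : ℝ :=
  deriv (fun x => f (x, z.2)) z.1

theorem measurable_partialSnd {α : Type*} [MeasurableSpace α] {f : α × ℝ → ℝ}
    (hf : Measurable f) (hd : ∀ x, Differentiable ℝ fun y => f (x, y)) :
    Measurable (partialSnd f) := by
  -- `measurable_deriv_with_param` needs joint continuity, which `f` lacks; instead `partialSnd f`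
  -- is the pointwise limit of the difference quotients with step `1 / (n + 1)`.
  have hstep : Tendsto (fun n : ℕ => ((n : ℝ) + 1)⁻¹) atTop (𝓝[>] 0) :=
    tendsto_inv_atTop_nhdsGT_zero.comp
      (tendsto_natCast_atTop_atTop.atTop_add tendsto_const_nhds)
  refine measurable_of_tendsto_metrizable
    (f := fun (n : ℕ) z => ((n : ℝ) + 1)⁻¹⁻¹ • (f (z.1, z.2 + ((n : ℝ) + 1)⁻¹) - f z))
    (fun n => by fun_prop) (tendsto_pi_nhds.2 fun z => ?_)
  exact ((hd z.1) z.2).hasDerivAt.tendsto_slope_zero_right.comp hstep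

theorem measurable_partialFst {β : Type*} [MeasurableSpace β] {f : ℝ × β → ℝ}
    (hf : Measurable f) (hd : ∀ y, Differentiable ℝ fun x => f (x, y)) :
    Measurable (partialFst f) :=
  (measurable_partialSnd (hf.comp measurable_swap) hd).comp measurable_swap

theorem deriv_eq_mul_deriv_div_self_of_nonneg {f : ℝ → ℝ} (hf : ∀ x, 0 ≤ f x) (x : ℝ) :
    deriv f x = f x * (deriv f x / f x) := by
  rcases eq_or_ne (f x) 0 with h | h
  · have hmin : IsLocalMin f x := Eventually.of_forall fun y => h ▸ hf y
    rw [hmin.deriv_eq_zero, zero_div, mul_zero]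
  · field_simp

section Quadratic

variable {α : Type*} [MeasurableSpace α] {μ : Measure α} {f g h : α → ℝ}

theorem integrable_mul_mul_of_integrable_mul_sq (hf : ∀ x, 0 ≤ f x)
    (hg : Integrable (fun x => f x * g x ^ 2) μ) (hh : Integrable (fun x => f x * h x ^ 2) μ)
    (hm : AEStronglyMeasurable (fun x => f x * (g x * h x)) μ) :
    Integrable (fun x => f x * (g x * h x)) μ := by
  refine ((hg.add hh).div_const 2).mono' hm (Eventually.of_forall fun x => ?_)
  rw [Real.norm_eq_abs, abs_le, Pi.add_apply]
  constructor <;> nlinarith [mul_nonneg (hf x) (sq_nonneg (g x + h x)),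
    mul_nonneg (hf x) (sq_nonneg (g x - h x))]

theorem integrable_mul_add_mul_sq (a b : ℝ) (hg : Integrable (fun x => f x * g x ^ 2) μ)
    (hh : Integrable (fun x => f x * h x ^ 2) μ) (hgh : Integrable (fun x => f x * (g x * h x)) μ) :
    Integrable (fun x => f x * (a * g x + b * h x) ^ 2) μ := by
  have hexp : ∀ x, f x * (a * g x + b * h x) ^ 2 =
      a ^ 2 * (f x * g x ^ 2) + 2 * a * b * (f x * (g x * h x)) + b ^ 2 * (f x * h x ^ 2) :=
    fun x => by ring
  simp_rw [hexp]
  exact ((hg.const_mul _).add (hgh.const_mul _)).add (hh.const_mul _)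

theorem integral_mul_add_mul_sq (a b : ℝ) (hg : Integrable (fun x => f x * g x ^ 2) μ)
    (hh : Integrable (fun x => f x * h x ^ 2) μ) (hgh : Integrable (fun x => f x * (g x * h x)) μ) :
    ∫ x, f x * (a * g x + b * h x) ^ 2 ∂μ =
      a ^ 2 * ∫ x, f x * g x ^ 2 ∂μ + 2 * a * b * ∫ x, f x * (g x * h x) ∂μ +
        b ^ 2 * ∫ x, f x * h x ^ 2 ∂μ := by
  have hexp : ∀ x, f x * (a * g x + b * h x) ^ 2 =
      a ^ 2 * (f x * g x ^ 2) + 2 * a * b * (f x * (g x * h x)) + b ^ 2 * (f x * h x ^ 2) :=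
    fun x => by ring
  simp_rw [hexp]
  rw [integral_add (by exact (hg.const_mul _).add (hgh.const_mul _)) (hh.const_mul _),
    integral_add (hg.const_mul _) (hgh.const_mul _), integral_const_mul, integral_const_mul,
    integral_const_mul]

theorem integral_mul_sub_mul_sq (c : ℝ) (hg : Integrable (fun x => f x * g x ^ 2) μ)
    (hh : Integrable (fun x => f x * h x ^ 2) μ) (hgh : Integrable (fun x => f x * (g x * h x)) μ) :
    ∫ x, f x * (g x - c * h x) ^ 2 ∂μ =
      ∫ x, f x * g x ^ 2 ∂μ - 2 * c * ∫ x, f x * (g x * h x) ∂μ +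
        c ^ 2 * ∫ x, f x * h x ^ 2 ∂μ := by
  convert integral_mul_add_mul_sq 1 (-c) hg hh hgh using 1
  · simp only [one_mul, neg_mul, sub_eq_add_neg]
  · ring

end Quadratic

theorem measurePreserving_shearSubRight :
    MeasurePreserving (MeasurableEquiv.shearSubRight ℝ) volume volume := by
  rw [Measure.volume_eq_prod]
  exact measurePreserving_prod_sub volume volume

theorem integral_comp_shearSubRight (f : ℝ × ℝ → ℝ) :
    ∫ q : ℝ × ℝ, f (q.1, q.2 - q.1) = ∫ z, f z :=
  measurePreserving_shearSubRight.integral_comp' f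

theorem integrable_comp_shearSubRight_iff {f : ℝ × ℝ → ℝ} :
    Integrable (fun q : ℝ × ℝ => f (q.1, q.2 - q.1)) ↔ Integrable f :=
  measurePreserving_shearSubRight.integrable_comp_emb (MeasurableEquiv.measurableEmbedding _)

theorem MeasureTheory.Integrable.ae_integrable_antidiagonal {f : ℝ × ℝ → ℝ} (hf : Integrable f) :
    ∀ᵐ w, Integrable fun x => f (x, w - x) := by
  have h := integrable_comp_shearSubRight_iff.2 hf
  rw [Measure.volume_eq_prod] at h
  exact h.prod_left_ae

theorem MeasureTheory.Integrable.sumDensity {f : ℝ × ℝ → ℝ} (hf : Integrable f) :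
    Integrable (sumDensity f) := by
  have h := integrable_comp_shearSubRight_iff.2 hf
  rw [Measure.volume_eq_prod] at h
  exact h.integral_prod_right

theorem sumDensity_nonneg {f : ℝ × ℝ → ℝ} (hf : ∀ z, 0 ≤ f z) (w : ℝ) : 0 ≤ sumDensity f w :=
  integral_nonneg fun _ => hf _

theorem integral_mul_comp_add {f : ℝ × ℝ → ℝ} {g : ℝ → ℝ}
    (h : Integrable fun z => f z * g (z.1 + z.2)) :
    ∫ z, f z * g (z.1 + z.2) = ∫ w, sumDensity f w * g w := by
  have h' := integrable_comp_shearSubRight_iff.2 h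
  rw [← integral_comp_shearSubRight]
  simp only [add_sub_cancel] at h' ⊢
  rw [Measure.volume_eq_prod] at h' ⊢
  simp_rw [integral_prod_symm _ h', integral_mul_const, sumDensity]

theorem integrable_mul_comp_add_of_nonneg {f : ℝ × ℝ → ℝ} {g : ℝ → ℝ} (hf : Integrable f)
    (hf₀ : ∀ z, 0 ≤ f z) (hg : AEStronglyMeasurable g)
    (h : Integrable fun w => sumDensity f w * g w) :
    Integrable fun z => f z * g (z.1 + z.2) := by
  rw [← integrable_comp_shearSubRight_iff]
  simp only [add_sub_cancel]
  have hf' := integrable_comp_shearSubRight_iff.2 hf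
  rw [Measure.volume_eq_prod] at hf' ⊢
  refine (integrable_prod_iff' (hf'.aestronglyMeasurable.mul hg.comp_snd)).2 ⟨?_, ?_⟩
  · filter_upwards [hf.ae_integrable_antidiagonal] with w hw using hw.mul_const (g w)
  · convert h.norm using 2 with w
    simp_rw [Pi.mul_apply, norm_mul, Real.norm_of_nonneg (hf₀ _), integral_mul_const,
      Real.norm_of_nonneg (sumDensity_nonneg hf₀ w), sumDensity]

theorem exists_sumDensity_eq_add_integral {p : ℝ × ℝ → ℝ} (hp : Integrable p)
    (hd : ∀ x, Differentiable ℝ fun y => p (x, y)) (hD : Integrable (partialSnd p))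
    (hc : Continuous (sumDensity p)) :
    ∃ w₀, ∀ w, sumDensity p w = sumDensity p w₀ + ∫ u in w₀..w, sumDensity (partialSnd p) u := by
  obtain ⟨w₀, hw₀⟩ := hp.ae_integrable_antidiagonal.exists
  have hslice : ∀ᵐ x, Integrable fun y => partialSnd p (x, y) := by
    rw [Measure.volume_eq_prod] at hD
    exact hD.prod_right_ae
  have hfubini (w : ℝ) : ∫ x, ∫ u in w₀..w, partialSnd p (x, u - x) =
      ∫ u in w₀..w, sumDensity (partialSnd p) u := by
    have h := integrable_comp_shearSubRight_iff.2 hD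
    rw [Measure.volume_eq_prod] at h
    exact (intervalIntegral_integral_swap (f := fun u x => partialSnd p (x, u - x))
      (h.swap.mono_measure (Measure.prod_mono Measure.restrict_le_self le_rfl))).symm
  have hftc : ∀ᵐ w,
      sumDensity p w = sumDensity p w₀ + ∫ u in w₀..w, sumDensity (partialSnd p) u := by
    filter_upwards [hp.ae_integrable_antidiagonal] with w hw
    rw [← hfubini, ← sub_eq_iff_eq_add', sumDensity, sumDensity, ← integral_sub hw hw₀]
    refine integral_congr_ae ?_
    filter_upwards [hslice] with x hx
    rw [intervalIntegral.integral_comp_sub_right (fun y => partialSnd p (x, y))]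
    exact (intervalIntegral.integral_eq_sub_of_hasDerivAt (fun y _ => (hd x y).hasDerivAt)
      hx.intervalIntegrable).symm
  have := (hc.ae_eq_iff_eq volume
    (continuous_const.add (hD.sumDensity.continuous_primitive w₀))).1 hftc
  exact ⟨w₀, congrFun this⟩

theorem ae_hasDerivAt_sumDensity_snd {p : ℝ × ℝ → ℝ} (hp : Integrable p)
    (hd : ∀ x, Differentiable ℝ fun y => p (x, y)) (hD : Integrable (partialSnd p))
    (hc : Continuous (sumDensity p)) :
    ∀ᵐ w, HasDerivAt (sumDensity p) (sumDensity (partialSnd p) w) w := by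
  obtain ⟨w₀, hw₀⟩ := exists_sumDensity_eq_add_integral hp hd hD hc
  filter_upwards [LocallyIntegrable.ae_hasDerivAt_integral hD.sumDensity.locallyIntegrable]
    with w hw
  rw [funext hw₀]
  exact (hw w₀).const_add _

theorem sumDensity_comp_swap (f : ℝ × ℝ → ℝ) :
    sumDensity (fun z => f z.swap) = sumDensity f := by
  funext w
  simpa [sumDensity] using integral_sub_left_eq_self (fun x => f (x, w - x)) volume w

theorem ae_hasDerivAt_sumDensity_fst {p : ℝ × ℝ → ℝ} (hp : Integrable p)
    (hd : ∀ y, Differentiable ℝ fun x => p (x, y)) (hD : Integrable (partialFst p))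
    (hc : Continuous (sumDensity p)) :
    ∀ᵐ w, HasDerivAt (sumDensity p) (sumDensity (partialFst p) w) w := by
  have h := ae_hasDerivAt_sumDensity_snd (p := fun z => p z.swap) hp.swap hd hD.swap
    (by rwa [sumDensity_comp_swap])
  rw [← sumDensity_comp_swap (partialFst p)]
  rwa [sumDensity_comp_swap] at h

section Fisher

variable {p : ℝ × ℝ → ℝ}

theorem partialFst_eq_mul_score1 (hnn : ∀ z, 0 ≤ p z) (z : ℝ × ℝ) :
    partialFst p z = p z * score1 p z :=
  deriv_eq_mul_deriv_div_self_of_nonneg (fun x => hnn (x, z.2)) z.1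

theorem partialSnd_eq_mul_score2 (hnn : ∀ z, 0 ≤ p z) (z : ℝ × ℝ) :
    partialSnd p z = p z * score2 p z :=
  deriv_eq_mul_deriv_div_self_of_nonneg (fun y => hnn (z.1, y)) z.2

theorem deriv_sumDensity_eq_mul_scoreW (hnn : ∀ z, 0 ≤ p z) (w : ℝ) :
    deriv (sumDensity p) w = sumDensity p w * scoreW p w :=
  deriv_eq_mul_deriv_div_self_of_nonneg (sumDensity_nonneg hnn) w

theorem measurable_scoreW (hc : Continuous (sumDensity p)) : Measurable (scoreW p) :=
  (measurable_deriv _).div hc.measurable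

theorem aestronglyMeasurable_scoreW_comp_add (hc : Continuous (sumDensity p)) :
    AEStronglyMeasurable fun z : ℝ × ℝ => scoreW p (z.1 + z.2) :=
  ((measurable_scoreW hc).comp measurable_add).aestronglyMeasurable

theorem integrable_partialFst_mul (hm : Measurable p) (hnn : ∀ z, 0 ≤ p z)
    (hd : ∀ y, Differentiable ℝ fun x => p (x, y)) (hJ : Integrable fun z => p z * score1 p z ^ 2)
    {g : ℝ × ℝ → ℝ} (hg : Integrable fun z => p z * g z ^ 2) (hgm : AEStronglyMeasurable g) :
    Integrable fun z => partialFst p z * g z := by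
  simp only [partialFst_eq_mul_score1 hnn, mul_assoc]
  refine integrable_mul_mul_of_integrable_mul_sq hnn hJ hg
    (((measurable_partialFst hm hd).aestronglyMeasurable.mul hgm).congr ?_)
  exact Eventually.of_forall fun z => by simp [partialFst_eq_mul_score1 hnn, mul_assoc]

theorem integrable_partialFst (hm : Measurable p) (hnn : ∀ z, 0 ≤ p z)
    (hd : ∀ y, Differentiable ℝ fun x => p (x, y)) (hp : Integrable p)
    (hJ : Integrable fun z => p z * score1 p z ^ 2) : Integrable (partialFst p) := by
  simpa using integrable_partialFst_mul hm hnn hd hJ (g := fun _ => 1) (by simpa using hp)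
    aestronglyMeasurable_const

theorem integrable_partialSnd_mul (hm : Measurable p) (hnn : ∀ z, 0 ≤ p z)
    (hd : ∀ x, Differentiable ℝ fun y => p (x, y)) (hJ : Integrable fun z => p z * score2 p z ^ 2)
    {g : ℝ × ℝ → ℝ} (hg : Integrable fun z => p z * g z ^ 2) (hgm : AEStronglyMeasurable g) :
    Integrable fun z => partialSnd p z * g z := by
  simp only [partialSnd_eq_mul_score2 hnn, mul_assoc]
  refine integrable_mul_mul_of_integrable_mul_sq hnn hJ hg
    (((measurable_partialSnd hm hd).aestronglyMeasurable.mul hgm).congr ?_)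
  exact Eventually.of_forall fun z => by simp [partialSnd_eq_mul_score2 hnn, mul_assoc]

theorem integrable_partialSnd (hm : Measurable p) (hnn : ∀ z, 0 ≤ p z)
    (hd : ∀ x, Differentiable ℝ fun y => p (x, y)) (hp : Integrable p)
    (hJ : Integrable fun z => p z * score2 p z ^ 2) : Integrable (partialSnd p) := by
  simpa using integrable_partialSnd_mul hm hnn hd hJ (g := fun _ => 1) (by simpa using hp)
    aestronglyMeasurable_const

theorem integral_mul_scoreW_comp_add (hnn : ∀ z, 0 ≤ p z) {f : ℝ × ℝ → ℝ}
    (hf : ∀ᵐ w, HasDerivAt (sumDensity p) (sumDensity f w) w)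
    (h : Integrable fun z => f z * scoreW p (z.1 + z.2)) :
    ∫ z, f z * scoreW p (z.1 + z.2) = Jsum p := by
  rw [integral_mul_comp_add h, Jsum]
  refine integral_congr_ae ?_
  filter_upwards [hf] with w hw
  rw [← hw.deriv, deriv_sumDensity_eq_mul_scoreW hnn]
  ring

theorem integrable_mul_scoreW_comp_add_sq (hp : Integrable p) (hnn : ∀ z, 0 ≤ p z)
    (hc : Continuous (sumDensity p)) (hJW : Integrable fun w => sumDensity p w * scoreW p w ^ 2) :
    Integrable fun z => p z * scoreW p (z.1 + z.2) ^ 2 :=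
  integrable_mul_comp_add_of_nonneg hp hnn
    ((measurable_scoreW hc).pow_const 2).aestronglyMeasurable hJW

theorem integral_partialFst_mul_scoreW (hm : Measurable p) (hnn : ∀ z, 0 ≤ p z)
    (hd : ∀ y, Differentiable ℝ fun x => p (x, y)) (hp : Integrable p)
    (hJ : Integrable fun z => p z * score1 p z ^ 2) (hc : Continuous (sumDensity p))
    (hB : Integrable fun z => p z * scoreW p (z.1 + z.2) ^ 2) :
    ∫ z, partialFst p z * scoreW p (z.1 + z.2) = Jsum p :=
  integral_mul_scoreW_comp_add hnn
    (ae_hasDerivAt_sumDensity_fst hp hd (integrable_partialFst hm hnn hd hp hJ) hc)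
    (integrable_partialFst_mul hm hnn hd hJ hB
      (aestronglyMeasurable_scoreW_comp_add hc))

theorem integral_partialSnd_mul_scoreW (hm : Measurable p) (hnn : ∀ z, 0 ≤ p z)
    (hd : ∀ x, Differentiable ℝ fun y => p (x, y)) (hp : Integrable p)
    (hJ : Integrable fun z => p z * score2 p z ^ 2) (hc : Continuous (sumDensity p))
    (hB : Integrable fun z => p z * scoreW p (z.1 + z.2) ^ 2) :
    ∫ z, partialSnd p z * scoreW p (z.1 + z.2) = Jsum p :=
  integral_mul_scoreW_comp_add hnn
    (ae_hasDerivAt_sumDensity_snd hp hd (integrable_partialSnd hm hnn hd hp hJ) hc)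
    (integrable_partialSnd_mul hm hnn hd hJ hB
      (aestronglyMeasurable_scoreW_comp_add hc))

theorem mul_score_add_score_mul (hnn : ∀ z, 0 ≤ p z) (a b c : ℝ) (z : ℝ × ℝ) :
    p z * ((a * score1 p z + b * score2 p z) * c) =
      a * (partialFst p z * c) + b * (partialSnd p z * c) := by
  rw [partialFst_eq_mul_score1 hnn, partialSnd_eq_mul_score2 hnn]
  ring

theorem integrable_mul_score_mul_scoreW (hm : Measurable p) (hnn : ∀ z, 0 ≤ p z)
    (hd1 : ∀ y, Differentiable ℝ fun x => p (x, y)) (hd2 : ∀ x, Differentiable ℝ fun y => p (x, y))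
    (hJxx : Integrable fun z => p z * score1 p z ^ 2)
    (hJyy : Integrable fun z => p z * score2 p z ^ 2) (hc : Continuous (sumDensity p))
    (hB : Integrable fun z => p z * scoreW p (z.1 + z.2) ^ 2) (a b : ℝ) :
    Integrable fun z => p z * ((a * score1 p z + b * score2 p z) * scoreW p (z.1 + z.2)) := by
  have hBm := aestronglyMeasurable_scoreW_comp_add hc
  simp only [mul_score_add_score_mul hnn]
  exact ((integrable_partialFst_mul hm hnn hd1 hJxx hB hBm).const_mul a).add
    ((integrable_partialSnd_mul hm hnn hd2 hJyy hB hBm).const_mul b)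

theorem integral_mul_score_mul_scoreW (hm : Measurable p) (hnn : ∀ z, 0 ≤ p z)
    (hd1 : ∀ y, Differentiable ℝ fun x => p (x, y)) (hd2 : ∀ x, Differentiable ℝ fun y => p (x, y))
    (hp : Integrable p) (hJxx : Integrable fun z => p z * score1 p z ^ 2)
    (hJyy : Integrable fun z => p z * score2 p z ^ 2) (hc : Continuous (sumDensity p))
    (hB : Integrable fun z => p z * scoreW p (z.1 + z.2) ^ 2) (a b : ℝ) :
    ∫ z, p z * ((a * score1 p z + b * score2 p z) * scoreW p (z.1 + z.2)) = (a + b) * Jsum p := by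
  have hBm := aestronglyMeasurable_scoreW_comp_add hc
  simp only [mul_score_add_score_mul hnn]
  rw [integral_add ((integrable_partialFst_mul hm hnn hd1 hJxx hB hBm).const_mul a)
      ((integrable_partialSnd_mul hm hnn hd2 hJyy hB hBm).const_mul b),
    integral_const_mul, integral_const_mul,
    integral_partialFst_mul_scoreW hm hnn hd1 hp hJxx hc hB,
    integral_partialSnd_mul_scoreW hm hnn hd2 hp hJyy hc hB]
  ring

end Fisher

/-- For `(X,Y)` with a differentiable joint density (finite `J_XX`, `J_YY`, `J_XY`) whose
sum `W = X+Y` has a differentiable density with finite Fisher information, for all reals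
`a`, `b` one has `(a+b)² J(X+Y) ≤ a² J_XX + 2ab J_XY + b² J_YY`; this follows from the
identity `E[(a ρ⁽¹⁾ + b ρ⁽²⁾ − (a+b) ρ_W(X+Y))²] = a² J_XX + 2ab J_XY + b² J_YY − (a+b)² J(X+Y) ≥ 0`. -/
theorem quadratic_fisher_bound
    (p : ℝ × ℝ → ℝ) (hp : IsJointDensity p)
    (hd1 : ∀ y, Differentiable ℝ (fun x => p (x, y)))
    (hd2 : ∀ x, Differentiable ℝ (fun y => p (x, y)))
    (hJxx : Integrable (fun z => p z * (score1 p z) ^ 2))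
    (hJyy : Integrable (fun z => p z * (score2 p z) ^ 2))
    (hJxy : Integrable (fun z => p z * (score1 p z * score2 p z)))
    (hdW : Differentiable ℝ (sumDensity p))
    (hJW : Integrable (fun w => sumDensity p w * (scoreW p w) ^ 2))
    (a b : ℝ) :
    (a + b) ^ 2 * Jsum p ≤ a ^ 2 * Jxx p + 2 * a * b * Jxy p + b ^ 2 * Jyy p
      ∧ (∫ z : ℝ × ℝ,
            p z * (a * score1 p z + b * score2 p z - (a + b) * scoreW p (z.1 + z.2)) ^ 2)
          = a ^ 2 * Jxx p + 2 * a * b * Jxy p + b ^ 2 * Jyy p - (a + b) ^ 2 * Jsum p := by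
  obtain ⟨hm, hnn, hone⟩ := hp
  have hpi : Integrable p := Integrable.of_integral_ne_zero (by rw [hone]; exact one_ne_zero)
  have hB := integrable_mul_scoreW_comp_add_sq hpi hnn hdW.continuous hJW
  have hAB := integrable_mul_score_mul_scoreW hm hnn hd1 hd2 hJxx hJyy hdW.continuous hB a b
  have key : ∫ z, p z * (a * score1 p z + b * score2 p z - (a + b) * scoreW p (z.1 + z.2)) ^ 2 =
      a ^ 2 * Jxx p + 2 * a * b * Jxy p + b ^ 2 * Jyy p - (a + b) ^ 2 * Jsum p := by
    rw [integral_mul_sub_mul_sq (a + b) (integrable_mul_add_mul_sq a b hJxx hJyy hJxy) hB hAB,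
      integral_mul_add_mul_sq a b hJxx hJyy hJxy,
      integral_mul_score_mul_scoreW hm hnn hd1 hd2 hpi hJxx hJyy hdW.continuous hB,
      integral_mul_comp_add (g := fun w => scoreW p w ^ 2) hB]
    simp only [Jxx, Jyy, Jxy, Jsum]
    ring
  refine ⟨?_, key⟩
  have hnonneg := key ▸ integral_nonneg fun z => mul_nonneg (hnn z)
    (sq_nonneg (a * score1 p z + b * score2 p z - (a + b) * scoreW p (z.1 + z.2)))
  linarith
end

section
/- Let (X,Y) have a differentiable joint density on ℝ² with finite J_XX, J_YY, J_XY satisfying J_XX + J_YY − 2J_XY > 0, and let W = X+Y have a differentiable density with finite Fisher information. Then J(X+Y) ≤ (J_XX J_YY − J_XY²) / (J_XX + J_YY − 2J_XY). -/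
/-!
Write `p_W(w) = ∫ p(x, w - x) dx`. Differentiating through either coordinate gives
`p_W' = ∫ ∂₁p(x, w - x) dx = ∫ ∂₂p(x, w - x) dx`, so for `l + m = 1` the score `ρ_W(w)` is the
conditional mean of `s = l ρ⁽¹⁾ + m ρ⁽²⁾` on the line `x + y = w`. Cauchy–Schwarz on each line
gives `J(X+Y) ≤ E[s²] = l² J_XX + 2 l m J_XY + m² J_YY`, and `l = (J_YY - J_XY) / D`,
`m = (J_XX - J_XY) / D` with `D = J_XX + J_YY - 2 J_XY` minimise the right-hand side.

No domination is available to differentiate under the integral. Instead, the partial derivatives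
are integrable (`|∂p| ≤ (p + p ρ²) / 2`), so by Fubini and the fundamental theorem of calculus on
each line `p_W` agrees a.e. with a primitive of `w ↦ ∫ ∂p(x, w - x) dx`; by continuity it agrees
everywhere, and Lebesgue's differentiation theorem identifies `p_W'` almost everywhere.
-/

open MeasureTheory Real

open Filter Topology

section SumDensity

variable {g : ℝ × ℝ → ℝ}

lemma integrable_comp_sumShear (hg : Integrable g) :
    Integrable (fun z : ℝ × ℝ => g (z.2, z.1 - z.2)) (volume.prod volume) :=
  (measurePreserving_prod_sub_swap volume volume).integrable_comp_of_integrable hg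

lemma ae_integrable_sumSlice (hg : Integrable g) :
    ∀ᵐ t : ℝ, Integrable (fun x => g (x, t - x)) :=
  (integrable_comp_sumShear hg).prod_right_ae

lemma integrable_sumDensity (hg : Integrable g) : Integrable (sumDensity g) :=
  (integrable_comp_sumShear hg).integral_prod_left

lemma integral_sumDensity (hg : Integrable g) : ∫ t, sumDensity g t = ∫ z, g z := by
  have hmp := measurePreserving_prod_sub_swap (volume : Measure ℝ) (volume : Measure ℝ)
  calc ∫ t, sumDensity g t = ∫ z : ℝ × ℝ, g (z.2, z.1 - z.2) ∂(volume.prod volume) :=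
        (integral_prod _ (integrable_comp_sumShear hg)).symm
    _ = ∫ z, g z := by
        rw [← integral_map hmp.aemeasurable (by rw [hmp.map_eq]; exact hg.aestronglyMeasurable),
          hmp.map_eq]
        rfl

lemma sumDensity_comp_swap_s5 (g : ℝ × ℝ → ℝ) : sumDensity (g ∘ Prod.swap) = sumDensity g := by
  ext t
  simpa [sumDensity] using integral_sub_left_eq_self (fun x => g (x, t - x)) volume t

end SumDensity

section PartialDeriv

noncomputable def partialDeriv₁ (q : ℝ × ℝ → ℝ) (z : ℝ × ℝ) : ℝ := deriv (fun x => q (x, z.2)) z.1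

noncomputable def partialDeriv₂ (q : ℝ × ℝ → ℝ) (z : ℝ × ℝ) : ℝ := deriv (fun y => q (z.1, y)) z.2

variable {q : ℝ × ℝ → ℝ}

lemma partialDeriv₁_eq_partialDeriv₂_comp_swap (q : ℝ × ℝ → ℝ) :
    partialDeriv₁ q = partialDeriv₂ (q ∘ Prod.swap) ∘ Prod.swap := rfl

lemma measurable_partialDeriv₂ (hm : Measurable q) (hd : ∀ x, Differentiable ℝ fun y => q (x, y)) :
    Measurable (partialDeriv₂ q) := by
  have hstep : Tendsto (fun n : ℕ => 1 / ((n : ℝ) + 1)) atTop (𝓝[>] 0) :=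
    tendsto_nhdsWithin_iff.mpr ⟨tendsto_one_div_add_atTop_nhds_zero_nat,
      Eventually.of_forall fun _ => Set.mem_Ioi.mpr Nat.one_div_pos_of_nat⟩
  refine measurable_of_tendsto_metrizable (f := fun (n : ℕ) (z : ℝ × ℝ) =>
    (1 / ((n : ℝ) + 1))⁻¹ • (q (z.1, z.2 + 1 / ((n : ℝ) + 1)) - q (z.1, z.2)))
    (fun n => by fun_prop) (tendsto_pi_nhds.mpr fun z => ?_)
  exact ((hd z.1 z.2).hasDerivAt.tendsto_slope_zero_right).comp hstep

lemma measurable_partialDeriv₁ (hm : Measurable q) (hd : ∀ y, Differentiable ℝ fun x => q (x, y)) :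
    Measurable (partialDeriv₁ q) :=
  (measurable_partialDeriv₂ (hm.comp measurable_swap) hd).comp measurable_swap

lemma partialDeriv₂_eq_zero_of_nonneg (hq : ∀ z, 0 ≤ q z) {z : ℝ × ℝ} (hz : q z = 0) :
    partialDeriv₂ q z = 0 :=
  IsLocalMin.deriv_eq_zero <| Eventually.of_forall fun y => (le_of_eq hz).trans (hq (z.1, y))

lemma partialDeriv₁_eq_zero_of_nonneg (hq : ∀ z, 0 ≤ q z) {z : ℝ × ℝ} (hz : q z = 0) :
    partialDeriv₁ q z = 0 :=
  IsLocalMin.deriv_eq_zero <| Eventually.of_forall fun x => (le_of_eq hz).trans (hq (x, z.2))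

end PartialDeriv

section Primitive

variable {q : ℝ × ℝ → ℝ}

lemma sumDensity_sub_sumDensity (hd : ∀ x, Differentiable ℝ fun y => q (x, y))
    (hD : Integrable (partialDeriv₂ q)) {u v : ℝ} (hu : Integrable fun x => q (x, u - x))
    (hv : Integrable fun x => q (x, v - x)) :
    sumDensity q v - sumDensity q u = ∫ t in u..v, sumDensity (partialDeriv₂ q) t := by
  have hshear := integrable_comp_sumShear hD
  calc sumDensity q v - sumDensity q u = ∫ x, (q (x, v - x) - q (x, u - x)) :=
        (integral_sub hv hu).symm
    _ = ∫ x, ∫ t in u..v, partialDeriv₂ q (x, t - x) := by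
        refine integral_congr_ae ?_
        filter_upwards [hshear.prod_left_ae] with x hx
        refine (intervalIntegral.integral_eq_sub_of_hasDerivAt (f := fun t => q (x, t - x))
          (fun t _ => ?_) hx.intervalIntegrable).symm
        exact (hd x (t - x)).hasDerivAt.comp_sub_const t x
    _ = ∫ t in u..v, sumDensity (partialDeriv₂ q) t := by
        refine (intervalIntegral_integral_swap (hshear.mono_measure ?_)).symm
        rw [← Measure.restrict_univ (μ := volume), Measure.prod_restrict, Measure.restrict_univ]
        exact Measure.restrict_le_self

lemma ae_hasDerivAt_sumDensity_partialDeriv₂ (hq : Integrable q)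
    (hd : ∀ x, Differentiable ℝ fun y => q (x, y)) (hD : Integrable (partialDeriv₂ q))
    (hc : Continuous (sumDensity q)) :
    ∀ᵐ t, HasDerivAt (sumDensity q) (sumDensity (partialDeriv₂ q) t) t := by
  have hF := integrable_sumDensity hD
  obtain ⟨u, hu⟩ := (ae_integrable_sumSlice hq).exists
  have hprimitive :
      sumDensity q = fun v => sumDensity q u + ∫ t in u..v, sumDensity (partialDeriv₂ q) t := by
    refine (hc.ae_eq_iff_eq volume (continuous_const.add (hF.continuous_primitive u))).mp ?_
    filter_upwards [ae_integrable_sumSlice hq] with v hv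
    show sumDensity q v = sumDensity q u + ∫ t in u..v, sumDensity (partialDeriv₂ q) t
    rw [← sumDensity_sub_sumDensity hd hD hu hv, add_sub_cancel]
  filter_upwards [LocallyIntegrable.ae_hasDerivAt_integral hF.locallyIntegrable] with t ht
  rw [hprimitive]
  exact (ht u).const_add _

lemma ae_hasDerivAt_sumDensity_partialDeriv₁ (hq : Integrable q)
    (hd : ∀ y, Differentiable ℝ fun x => q (x, y)) (hD : Integrable (partialDeriv₁ q))
    (hc : Continuous (sumDensity q)) :
    ∀ᵐ t, HasDerivAt (sumDensity q) (sumDensity (partialDeriv₁ q) t) t := by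
  rw [partialDeriv₁_eq_partialDeriv₂_comp_swap, sumDensity_comp_swap_s5 (partialDeriv₂ _),
    ← sumDensity_comp_swap_s5 q]
  exact ae_hasDerivAt_sumDensity_partialDeriv₂ hq.swap hd hD.swap
    (by rwa [sumDensity_comp_swap_s5])

end Primitive

section WeightedIntegral

variable {α : Type*} [MeasurableSpace α] {μ : Measure α} {w f : α → ℝ}

lemma abs_le_add_mul_div_sq {a b : ℝ} (ha : 0 ≤ a) (hb : a = 0 → b = 0) :
    |b| ≤ (a + a * (b / a) ^ 2) / 2 := by
  set r := b / a
  have hbr : b = a * r := (mul_div_cancel_of_imp' hb).symm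
  rw [hbr, abs_mul, abs_of_nonneg ha]
  nlinarith [mul_nonneg ha (sq_nonneg (|r| - 1)), sq_abs r]

lemma integrable_of_integrable_mul_div_sq (hw0 : ∀ a, 0 ≤ w a) (hw : Integrable w μ)
    (hf : AEStronglyMeasurable f μ) (hzero : ∀ a, w a = 0 → f a = 0)
    (hJ : Integrable (fun a => w a * (f a / w a) ^ 2) μ) : Integrable f μ :=
  ((hw.add hJ).div_const 2).mono' hf <| Eventually.of_forall fun a =>
    (Real.norm_eq_abs (f a)).trans_le (abs_le_add_mul_div_sq (hw0 a) (hzero a))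

lemma integral_mul_div_integral_sq_le (hw0 : ∀ a, 0 ≤ w a) (hw : Integrable w μ)
    (hwf : Integrable (fun a => w a * f a) μ) (hwf2 : Integrable (fun a => w a * f a ^ 2) μ) :
    (∫ a, w a ∂μ) * ((∫ a, w a * f a ∂μ) / ∫ a, w a ∂μ) ^ 2 ≤ ∫ a, w a * f a ^ 2 ∂μ := by
  set P := ∫ a, w a ∂μ
  set B := ∫ a, w a * f a ∂μ
  set r := B / P
  have hvar : 0 ≤ ∫ a, w a * (f a - r) ^ 2 ∂μ :=
    integral_nonneg fun a => mul_nonneg (hw0 a) (sq_nonneg _)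
  have hexpand : ∫ a, w a * (f a - r) ^ 2 ∂μ = (∫ a, w a * f a ^ 2 ∂μ) - 2 * r * B + r ^ 2 * P := by
    simp_rw [show ∀ a, w a * (f a - r) ^ 2 = w a * f a ^ 2 - 2 * r * (w a * f a) + r ^ 2 * w a
      from fun a => by ring]
    have hwf' : Integrable (fun a => 2 * r * (w a * f a)) μ := hwf.const_mul _
    rw [integral_add (f := fun a => w a * f a ^ 2 - 2 * r * (w a * f a)) (hwf2.sub hwf')
      (hw.const_mul _), integral_sub hwf2 hwf',
      integral_const_mul, integral_const_mul]
  have hrB : r * B = r ^ 2 * P := by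
    rcases eq_or_ne P 0 with hP | hP
    · simp [r, hP]
    · simp only [r]; field_simp
  nlinarith

end WeightedIntegral

section FisherInformation

variable {p : ℝ × ℝ → ℝ}

lemma mul_score1 (hp0 : ∀ z, 0 ≤ p z) (z : ℝ × ℝ) : p z * score1 p z = partialDeriv₁ p z :=
  mul_div_cancel_of_imp' (partialDeriv₁_eq_zero_of_nonneg hp0)

lemma mul_score2 (hp0 : ∀ z, 0 ≤ p z) (z : ℝ × ℝ) : p z * score2 p z = partialDeriv₂ p z :=
  mul_div_cancel_of_imp' (partialDeriv₂_eq_zero_of_nonneg hp0)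

lemma IsJointDensity.integrable (hp : IsJointDensity p) : Integrable p :=
  integrable_of_integral_eq_one hp.2.2

lemma integrable_partialDeriv₁ (hp : IsJointDensity p)
    (hd1 : ∀ y, Differentiable ℝ fun x => p (x, y))
    (hJxx : Integrable fun z => p z * score1 p z ^ 2) : Integrable (partialDeriv₁ p) :=
  integrable_of_integrable_mul_div_sq hp.2.1 hp.integrable
    (measurable_partialDeriv₁ hp.1 hd1).aestronglyMeasurable
    (fun _ => partialDeriv₁_eq_zero_of_nonneg hp.2.1) hJxx

lemma integrable_partialDeriv₂ (hp : IsJointDensity p)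
    (hd2 : ∀ x, Differentiable ℝ fun y => p (x, y))
    (hJyy : Integrable fun z => p z * score2 p z ^ 2) : Integrable (partialDeriv₂ p) :=
  integrable_of_integrable_mul_div_sq hp.2.1 hp.integrable
    (measurable_partialDeriv₂ hp.1 hd2).aestronglyMeasurable
    (fun _ => partialDeriv₂_eq_zero_of_nonneg hp.2.1) hJyy

lemma mul_add_score_eq (hp0 : ∀ z, 0 ≤ p z) (l m : ℝ) :
    (fun z => p z * (l * score1 p z + m * score2 p z)) =
      fun z => l * partialDeriv₁ p z + m * partialDeriv₂ p z := by
  ext z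
  rw [← mul_score1 hp0, ← mul_score2 hp0]
  ring

lemma ae_deriv_sumDensity_eq (hp : IsJointDensity p)
    (hd1 : ∀ y, Differentiable ℝ fun x => p (x, y)) (hd2 : ∀ x, Differentiable ℝ fun y => p (x, y))
    (hJxx : Integrable fun z => p z * score1 p z ^ 2)
    (hJyy : Integrable fun z => p z * score2 p z ^ 2) (hc : Continuous (sumDensity p))
    {l m : ℝ} (hlm : l + m = 1) :
    deriv (sumDensity p) =ᵐ[volume]
      sumDensity fun z => p z * (l * score1 p z + m * score2 p z) := by
  have hD1 := integrable_partialDeriv₁ hp hd1 hJxx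
  have hD2 := integrable_partialDeriv₂ hp hd2 hJyy
  filter_upwards [ae_hasDerivAt_sumDensity_partialDeriv₁ hp.integrable hd1 hD1 hc,
    ae_hasDerivAt_sumDensity_partialDeriv₂ hp.integrable hd2 hD2 hc, ae_integrable_sumSlice hD1,
    ae_integrable_sumSlice hD2] with t h1 h2 i1 i2
  calc deriv (sumDensity p) t
      = l * sumDensity (partialDeriv₁ p) t + m * sumDensity (partialDeriv₂ p) t := by
        rw [← h1.deriv, ← h2.deriv, ← add_mul, hlm, one_mul]
    _ = _ := by
        rw [mul_add_score_eq hp.2.1, sumDensity, sumDensity, sumDensity, integral_add (i1.const_mul l)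
          (i2.const_mul m), integral_const_mul, integral_const_mul]

lemma Jsum_le_integral_of_ae_deriv_eq (hp0 : ∀ z, 0 ≤ p z) (hp : Integrable p)
    {s : ℝ × ℝ → ℝ} (hps : Integrable fun z => p z * s z)
    (hps2 : Integrable fun z => p z * s z ^ 2)
    (hderiv : deriv (sumDensity p) =ᵐ[volume] sumDensity fun z => p z * s z)
    (hJW : Integrable fun w => sumDensity p w * scoreW p w ^ 2) :
    Jsum p ≤ ∫ z, p z * s z ^ 2 := by
  calc Jsum p ≤ ∫ t, sumDensity (fun z => p z * s z ^ 2) t := by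
        refine integral_mono_ae hJW (integrable_sumDensity hps2) ?_
        filter_upwards [hderiv, ae_integrable_sumSlice hp, ae_integrable_sumSlice hps,
          ae_integrable_sumSlice hps2] with t ht h0 h1 h2
        rw [scoreW, ht]
        exact integral_mul_div_integral_sq_le (fun _ => hp0 _) h0 h1 h2
    _ = ∫ z, p z * s z ^ 2 := integral_sumDensity hps2

lemma Jsum_le_of_add_eq_one (hp : IsJointDensity p)
    (hd1 : ∀ y, Differentiable ℝ fun x => p (x, y)) (hd2 : ∀ x, Differentiable ℝ fun y => p (x, y))
    (hJxx : Integrable fun z => p z * score1 p z ^ 2)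
    (hJyy : Integrable fun z => p z * score2 p z ^ 2)
    (hJxy : Integrable fun z => p z * (score1 p z * score2 p z))
    (hc : Continuous (sumDensity p)) (hJW : Integrable fun w => sumDensity p w * scoreW p w ^ 2)
    {l m : ℝ} (hlm : l + m = 1) :
    Jsum p ≤ l ^ 2 * Jxx p + 2 * l * m * Jxy p + m ^ 2 * Jyy p := by
  have hps : Integrable fun z => p z * (l * score1 p z + m * score2 p z) := by
    rw [mul_add_score_eq hp.2.1]
    exact ((integrable_partialDeriv₁ hp hd1 hJxx).const_mul l).add
      ((integrable_partialDeriv₂ hp hd2 hJyy).const_mul m)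
  have hexpand : (fun z => p z * (l * score1 p z + m * score2 p z) ^ 2) = fun z =>
      l ^ 2 * (p z * score1 p z ^ 2) + 2 * l * m * (p z * (score1 p z * score2 p z)) +
        m ^ 2 * (p z * score2 p z ^ 2) := by
    ext z
    ring
  have h12 : Integrable fun z =>
      l ^ 2 * (p z * score1 p z ^ 2) + 2 * l * m * (p z * (score1 p z * score2 p z)) :=
    (hJxx.const_mul _).add (hJxy.const_mul _)
  have hps2 : Integrable fun z => p z * (l * score1 p z + m * score2 p z) ^ 2 := by
    rw [hexpand]
    exact h12.add (hJyy.const_mul _)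
  calc Jsum p ≤ ∫ z, p z * (l * score1 p z + m * score2 p z) ^ 2 :=
        Jsum_le_integral_of_ae_deriv_eq hp.2.1 hp.integrable hps hps2
          (ae_deriv_sumDensity_eq hp hd1 hd2 hJxx hJyy hc hlm) hJW
    _ = l ^ 2 * Jxx p + 2 * l * m * Jxy p + m ^ 2 * Jyy p := by
        rw [hexpand, integral_add h12 (hJyy.const_mul _),
          integral_add (hJxx.const_mul _) (hJxy.const_mul _), integral_const_mul,
          integral_const_mul, integral_const_mul]
        rfl

end FisherInformation

/-- For `(X,Y)` with a differentiable joint density with finite `J_XX`, `J_YY`, `J_XY`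
satisfying `J_XX + J_YY − 2 J_XY > 0`, whose sum `W = X+Y` has a differentiable density
with finite Fisher information,
`J(X+Y) ≤ (J_XX J_YY − J_XY²) / (J_XX + J_YY − 2 J_XY)`. -/
theorem fisher_info_sum_le
    (p : ℝ × ℝ → ℝ) (hp : IsJointDensity p)
    (hd1 : ∀ y, Differentiable ℝ (fun x => p (x, y)))
    (hd2 : ∀ x, Differentiable ℝ (fun y => p (x, y)))
    (hJxx : Integrable (fun z => p z * (score1 p z) ^ 2))
    (hJyy : Integrable (fun z => p z * (score2 p z) ^ 2))
    (hJxy : Integrable (fun z => p z * (score1 p z * score2 p z)))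
    (hpos : 0 < Jxx p + Jyy p - 2 * Jxy p)
    (hdW : Differentiable ℝ (sumDensity p))
    (hJW : Integrable (fun w => sumDensity p w * (scoreW p w) ^ 2)) :
    Jsum p ≤ (Jxx p * Jyy p - (Jxy p) ^ 2) / (Jxx p + Jyy p - 2 * Jxy p) := by
  set D := Jxx p + Jyy p - 2 * Jxy p with hD
  have hlm : (Jyy p - Jxy p) / D + (Jxx p - Jxy p) / D = 1 := by
    rw [← add_div, div_eq_one_iff_eq hpos.ne']
    ring
  convert Jsum_le_of_add_eq_one hp hd1 hd2 hJxx hJyy hJxy hdW.continuous hJW hlm using 1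
  field_simp
  rw [hD]
  ring
end

section
/- Let (X,Y) have a differentiable joint density on ℝ² with differentiable marginal densities, finite J_XX, J_YY, J_XY, and finite marginal Fisher informations J(X), J(Y). Define M_{1,−1}(x,y) = (ρ⁽¹⁾(x,y) − ρ_X(x)) − (ρ⁽²⁾(x,y) − ρ_Y(y)). Then E[M_{1,−1}(X,Y)²] = J_XX − 2J_XY + J_YY − J(X) − J(Y) − 2 E[ρ_X(X) ρ_Y(Y)]; in particular J_XX − 2J_XY + J_YY ≥ J(X) + J(Y) + 2 E[ρ_X(X) ρ_Y(Y)]. -/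
open MeasureTheory Real
open Set Filter Metric
open scoped Topology


/-- derivative of a nonneg differentiable function vanishes at zeros -/
lemma deriv_eq_zero_of_nonneg {f : ℝ → ℝ} (hf : Differentiable ℝ f)
    (h0 : ∀ x, 0 ≤ f x) {x : ℝ} (hx : f x = 0) : deriv f x = 0 :=
  IsLocalMin.deriv_eq_zero (by
    apply IsMinOn.isLocalMin (s := Set.univ) _ (by simp)
    intro y _
    simp [hx, h0 y])

lemma mul_score_eq {f : ℝ → ℝ} (hf : Differentiable ℝ f)
    (h0 : ∀ x, 0 ≤ f x) (x : ℝ) : f x * (deriv f x / f x) = deriv f x := by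
  rcases eq_or_ne (f x) 0 with h | h
  · simp [h, deriv_eq_zero_of_nonneg hf h0 h]
  · field_simp

/-- an integrable function that is differentiable with integrable derivative has
zero total integral of derivative -/
lemma integral_deriv_eq_zero {f : ℝ → ℝ} (hf : Differentiable ℝ f)
    (hfi : Integrable f) (hf'i : Integrable (deriv f)) : ∫ x, deriv f x = 0 := by
  have h1 : Tendsto f atTop (𝓝 0) :=
    tendsto_zero_of_hasDerivAt_of_integrableOn_Ioi (a := 0)
      (fun x _ => (hf x).hasDerivAt) hf'i.integrableOn hfi.integrableOn
  have h2 : Tendsto f atBot (𝓝 0) :=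
    tendsto_zero_of_hasDerivAt_of_integrableOn_Iic (a := 0)
      (fun x _ => (hf x).hasDerivAt) hf'i.integrableOn hfi.integrableOn
  have e1 : ∫ x in Ioi (0:ℝ), deriv f x = 0 - f 0 :=
    integral_Ioi_of_hasDerivAt_of_tendsto' (fun x _ => (hf x).hasDerivAt)
      hf'i.integrableOn h1
  have e2 : ∫ x in Iic (0:ℝ), deriv f x = f 0 - 0 :=
    integral_Iic_of_hasDerivAt_of_tendsto' (fun x _ => (hf x).hasDerivAt)
      hf'i.integrableOn h2
  rw [← intervalIntegral.integral_Iic_add_Ioi (b := (0:ℝ)) hf'i.integrableOn hf'i.integrableOn, e1, e2]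
  ring

lemma dense_of_ae {S : Set ℝ} (h : ∀ᵐ x, x ∈ S) : Dense S := by
  intro x
  rw [Metric.mem_closure_iff]
  intro ε hε
  by_contra hne
  push_neg at hne
  have hsub : Metric.ball x ε ⊆ {y | y ∈ S}ᶜ := by
    intro y hy hyS
    refine absurd (hne y hyS) (not_le.mpr ?_)
    rw [dist_comm]
    exact Metric.mem_ball.mp hy
  have : volume (Metric.ball x ε) = 0 := measure_mono_null hsub (ae_iff.mp h)
  exact absurd this (ne_of_gt (measure_ball_pos volume x hε))

/-- Two integrable functions on ℝ with equal integrals on all Ioc intervals agree a.e. -/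
lemma ae_eq_of_integral_Ioc_eq {u v : ℝ → ℝ} (hu : Integrable u) (hv : Integrable v)
    (h : ∀ a b : ℝ, a ≤ b → ∫ t in Ioc a b, u t = ∫ t in Ioc a b, v t) :
    u =ᵐ[volume] v := by
  have hw : Integrable (u - v) := hu.sub hv
  have key : ∀ᵐ x, Tendsto (fun r => ⨍ y in closedBall x r, (u - v) y) (𝓝[>] (0:ℝ))
      (𝓝 ((u - v) x)) := by
    filter_upwards [IsUnifLocDoublingMeasure.ae_tendsto_average
      (μ := (volume : Measure ℝ)) hw.locallyIntegrable 1] with x hx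
    exact hx (fun _ => x) id tendsto_id (by
      filter_upwards [self_mem_nhdsWithin] with r (hr : 0 < r)
      simp [mem_closedBall, hr.le])
  filter_upwards [key] with x hx
  have hz : ∀ᶠ r in 𝓝[>] (0:ℝ), (fun r => ⨍ y in closedBall x r, (u - v) y) r = 0 := by
    filter_upwards [self_mem_nhdsWithin] with r (hr : 0 < r)
    have hIcc : ∫ y in closedBall x r, (u - v) y = 0 := by
      rw [Real.closedBall_eq_Icc, integral_Icc_eq_integral_Ioc]
      have : ∫ t in Ioc (x - r) (x + r), (u - v) t
          = (∫ t in Ioc (x - r) (x + r), u t) - ∫ t in Ioc (x - r) (x + r), v t :=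
        integral_sub hu.integrableOn hv.integrableOn
      rw [this, h _ _ (by linarith)]
      ring
    have hIcc' : ∫ y in closedBall x r, (u y - v y) = 0 := hIcc
    simp [setAverage_eq, hIcc']
  have h0 : Tendsto (fun _ : ℝ => (0:ℝ)) (𝓝[>] (0:ℝ)) (𝓝 ((u - v) x)) :=
    Tendsto.congr' hz hx
  have h1 : (u - v) x = 0 := tendsto_nhds_unique h0 tendsto_const_nhds
  have : u x - v x = 0 := h1
  linarith

noncomputable def pd1 (p : ℝ × ℝ → ℝ) (z : ℝ × ℝ) : ℝ := deriv (fun x => p (x, z.2)) z.1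
noncomputable def pd2 (p : ℝ × ℝ → ℝ) (z : ℝ × ℝ) : ℝ := deriv (fun y => p (z.1, y)) z.2

lemma measurable_pd1 {p : ℝ × ℝ → ℝ} (hp : Measurable p)
    (hd : ∀ y, Differentiable ℝ (fun x => p (x, y))) : Measurable (pd1 p) := by
  have hF : ∀ n : ℕ, Measurable (fun z : ℝ × ℝ =>
      (p (z.1 + ((n : ℝ) + 1)⁻¹, z.2) - p z) / ((n : ℝ) + 1)⁻¹) := by
    intro n
    exact ((hp.comp ((measurable_fst.add_const _).prodMk measurable_snd)).sub hp).div_const _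
  refine measurable_of_tendsto_metrizable hF (tendsto_pi_nhds.mpr fun z => ?_)
  have hder : HasDerivAt (fun x => p (x, z.2)) (pd1 p z) z.1 := by
    have := (hd z.2 z.1).hasDerivAt
    exact this.congr_deriv rfl
  have hslope := hasDerivAt_iff_tendsto_slope.mp hder
  have hseq : Tendsto (fun n : ℕ => z.1 + ((n : ℝ) + 1)⁻¹) atTop (𝓝[≠] z.1) := by
    apply tendsto_nhdsWithin_of_tendsto_nhds_of_eventually_within
    · have : Tendsto (fun n : ℕ => ((n : ℝ) + 1)⁻¹) atTop (𝓝 0) :=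
        tendsto_one_div_add_atTop_nhds_zero_nat.congr (by intro n; rw [one_div])
      simpa using tendsto_const_nhds.add this
    · filter_upwards with n
      have : ((n : ℝ) + 1)⁻¹ ≠ 0 := by positivity
      simp [this]
  have := hslope.comp hseq
  refine this.congr fun n => ?_
  have hne : ((n : ℝ) + 1)⁻¹ ≠ 0 := by positivity
  simp only [Function.comp_apply, slope_def_field]
  rw [div_eq_div_iff]
  · ring
  · simp only [add_sub_cancel_left]; exact hne
  · exact hne

lemma measurable_pd2 {p : ℝ × ℝ → ℝ} (hp : Measurable p)
    (hd : ∀ x, Differentiable ℝ (fun y => p (x, y))) : Measurable (pd2 p) := by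
  have h := measurable_pd1 (p := p ∘ Prod.swap) (hp.comp measurable_swap) (fun y => hd y)
  exact h.comp measurable_swap

lemma integrable_of_integral_eq_one {α : Type*} [MeasurableSpace α] {μ : Measure α}
    {f : α → ℝ} (h1 : ∫ x, f x ∂μ = 1) : Integrable f μ := by
  by_contra h
  rw [integral_undef h] at h1
  norm_num at h1

lemma integrable_swap_iff_vol {f : ℝ × ℝ → ℝ} :
    Integrable (f ∘ Prod.swap) ↔ Integrable f := by
  rw [show (volume : Measure (ℝ × ℝ)) = (volume : Measure ℝ).prod volume from Measure.volume_eq_prod ..]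
  exact integrable_swap_iff

lemma integral_swap_vol (f : ℝ × ℝ → ℝ) :
    ∫ z : ℝ × ℝ, f z.swap = ∫ z, f z := by
  rw [show (volume : Measure (ℝ × ℝ)) = (volume : Measure ℝ).prod volume from Measure.volume_eq_prod ..]
  exact integral_prod_swap f

/-- Tonelli for a function of the form `q z * c z.1 ^ 2`. -/
lemma tonelli_fst {q : ℝ × ℝ → ℝ} (hq : Measurable q) (h0 : ∀ z, 0 ≤ q z)
    (hqi : Integrable q) {c : ℝ → ℝ} (hc : Measurable c)
    (hm : Integrable (fun x => (∫ y, q (x, y)) * c x ^ 2)) :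
    Integrable (fun z => q z * c z.1 ^ 2) ∧
      (∫ z, q z * c z.1 ^ 2) = ∫ x, (∫ y, q (x, y)) * c x ^ 2 := by
  have hvol : (volume : Measure (ℝ × ℝ)) = (volume : Measure ℝ).prod volume :=
    Measure.volume_eq_prod ..
  have hmeas : AEStronglyMeasurable (fun z : ℝ × ℝ => q z * c z.1 ^ 2)
      ((volume : Measure ℝ).prod volume) :=
    (hq.mul ((hc.comp measurable_fst).pow_const 2)).aestronglyMeasurable
  have hae : ∀ᵐ x : ℝ, Integrable (fun y => q (x, y)) := by
    rw [hvol] at hqi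
    exact hqi.prod_right_ae
  have hint : Integrable (fun z : ℝ × ℝ => q z * c z.1 ^ 2)
      ((volume : Measure ℝ).prod volume) := by
    refine (integrable_prod_iff hmeas).mpr ⟨?_, ?_⟩
    · filter_upwards [hae] with x hx
      exact hx.mul_const (c x ^ 2)
    · refine hm.congr ?_
      filter_upwards [hae] with x hx
      have hn : (fun y => ‖q (x, y) * c x ^ 2‖) = fun y => q (x, y) * c x ^ 2 :=
        funext fun y => Real.norm_of_nonneg (mul_nonneg (h0 _) (sq_nonneg _))
      calc (∫ y, q (x, y)) * c x ^ 2 = ∫ y, q (x, y) * c x ^ 2 :=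
            (integral_mul_const _ _).symm
        _ = ∫ y, ‖q (x, y) * c x ^ 2‖ := by rw [hn]
  constructor
  · rw [show Integrable (fun z => q z * c z.1 ^ 2) volume
        ↔ Integrable (fun z => q z * c z.1 ^ 2) ((volume : Measure ℝ).prod volume) from
      hvol ▸ Iff.rfl]
    exact hint
  · rw [show (∫ z, q z * c z.1 ^ 2) = ∫ z, q z * c z.1 ^ 2
        ∂((volume : Measure ℝ).prod volume) from hvol ▸ rfl]
    rw [integral_prod _ hint]
    congr 1
    funext x
    show (∫ y, q (x, y) * c x ^ 2) = _
    exact integral_mul_const _ _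

/-- integrability of the derivative of a nonneg density with finite Fisher information -/
lemma deriv_integrable_of_fisher {f : ℝ → ℝ} (hf : Differentiable ℝ f) (h0 : ∀ x, 0 ≤ f x)
    (hfi : Integrable f) (hJ : Integrable (fun x => f x * (deriv f x / f x) ^ 2)) :
    Integrable (deriv f) := by
  refine Integrable.mono' (((hfi.add hJ).div_const 2)) (measurable_deriv f).aestronglyMeasurable ?_
  filter_upwards with x
  have key : f x * (deriv f x / f x) = deriv f x := mul_score_eq hf h0 x
  set t := deriv f x / f x
  have h1 : |t| ≤ (1 + t ^ 2) / 2 := by nlinarith [sq_nonneg (|t| - 1), abs_nonneg t, sq_abs t]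
  calc ‖deriv f x‖ = f x * |t| := by
        rw [← key, Real.norm_eq_abs, abs_mul, abs_of_nonneg (h0 x)]
  _ ≤ f x * ((1 + t ^ 2) / 2) := by
        exact mul_le_mul_of_nonneg_left h1 (h0 x)
  _ = (f x + f x * t ^ 2) / 2 := by ring

/-- integrability of the partial derivative `pd1` -/
lemma pd1_integrable {q : ℝ × ℝ → ℝ} (hq : Measurable q) (h0 : ∀ z, 0 ≤ q z)
    (hqi : Integrable q) (hd : ∀ y, Differentiable ℝ (fun x => q (x, y)))
    (hJ : Integrable (fun z => q z * (pd1 q z / q z) ^ 2)) :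
    Integrable (pd1 q) := by
  refine Integrable.mono' (((hqi.add hJ).div_const 2))
    (measurable_pd1 hq hd).aestronglyMeasurable ?_
  filter_upwards with z
  have key : q z * (pd1 q z / q z) = pd1 q z :=
    mul_score_eq (f := fun x => q (x, z.2)) (hd z.2) (fun x => h0 _) z.1
  set t := pd1 q z / q z
  have h1 : |t| ≤ (1 + t ^ 2) / 2 := by nlinarith [sq_nonneg (|t| - 1), abs_nonneg t, sq_abs t]
  calc ‖pd1 q z‖ = q z * |t| := by
        rw [← key, Real.norm_eq_abs, abs_mul, abs_of_nonneg (h0 z)]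
  _ ≤ q z * ((1 + t ^ 2) / 2) := mul_le_mul_of_nonneg_left h1 (h0 z)
  _ = (q z + q z * t ^ 2) / 2 := by ring

section XSide
variable {q : ℝ × ℝ → ℝ}

/-- Fubini step: integral of `u x = ∫ y, pd1 q (x,y)` over `Ioc a b` for good endpoints. -/
lemma fub_step (hqi : Integrable q) (hd : ∀ y, Differentiable ℝ (fun x => q (x, y)))
    (hpd1 : Integrable (pd1 q)) {a b : ℝ}
    (ha : Integrable (fun y => q (a, y))) (hb : Integrable (fun y => q (b, y)))
    (hab : a ≤ b) :
    ∫ t in Set.Ioc a b, (∫ y, pd1 q (t, y)) = (∫ y, q (b, y)) - ∫ y, q (a, y) := by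
  have hvol : (volume : Measure (ℝ × ℝ)) = (volume : Measure ℝ).prod volume :=
    Measure.volume_eq_prod ..
  have hpd1' : Integrable (pd1 q) ((volume : Measure ℝ).prod volume) := hvol ▸ hpd1
  have hres : Integrable (pd1 q)
      (((volume : Measure ℝ).restrict (Set.Ioc a b)).prod volume) := by
    rw [Measure.restrict_prod_eq_prod_univ]
    exact hpd1'.restrict
  have h1 : ∫ z, pd1 q z ∂(((volume : Measure ℝ).restrict (Set.Ioc a b)).prod volume)
      = ∫ t in Set.Ioc a b, (∫ y, pd1 q (t, y)) := integral_prod _ hres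
  have h2 : ∫ z, pd1 q z ∂(((volume : Measure ℝ).restrict (Set.Ioc a b)).prod volume)
      = ∫ y, ∫ t in Set.Ioc a b, pd1 q (t, y) := integral_prod_symm _ hres
  have haeY : ∀ᵐ y : ℝ, Integrable (fun t => pd1 q (t, y)) := hpd1'.prod_left_ae
  have h3 : ∫ y, ∫ t in Set.Ioc a b, pd1 q (t, y) = ∫ y, (q (b, y) - q (a, y)) := by
    refine integral_congr_ae ?_
    filter_upwards [haeY] with y hy
    rw [← intervalIntegral.integral_of_le hab]
    exact intervalIntegral.integral_eq_sub_of_hasDerivAt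
      (fun t _ => ((hd y) t).hasDerivAt) hy.intervalIntegrable
  have h4 : ∫ y, (q (b, y) - q (a, y)) = (∫ y, q (b, y)) - ∫ y, q (a, y) :=
    integral_sub hb ha
  rw [← h1, h2, h3, h4]

/-- a.e. identification of the derivative of the marginal with the integral of `pd1`. -/
lemma marg_deriv_ae (hqi : Integrable q)
    (hd : ∀ y, Differentiable ℝ (fun x => q (x, y)))
    (hdm : Differentiable ℝ (fun x => ∫ y, q (x, y)))
    (hpd1 : Integrable (pd1 q))
    (hgXi : Integrable (deriv (fun x => ∫ y, q (x, y)))) :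
    deriv (fun x => ∫ y, q (x, y)) =ᵐ[volume] fun x => ∫ y, pd1 q (x, y) := by
  have hvol : (volume : Measure (ℝ × ℝ)) = (volume : Measure ℝ).prod volume :=
    Measure.volume_eq_prod ..
  set m : ℝ → ℝ := fun x => ∫ y, q (x, y) with hm
  set u : ℝ → ℝ := fun x => ∫ y, pd1 q (x, y) with hu
  have hqi' : Integrable q ((volume : Measure ℝ).prod volume) := hvol ▸ hqi
  have hpd1' : Integrable (pd1 q) ((volume : Measure ℝ).prod volume) := hvol ▸ hpd1
  have hS : ∀ᵐ x : ℝ, Integrable (fun y => q (x, y)) := hqi'.prod_right_ae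
  have hui : Integrable u := hpd1'.integral_prod_left
  obtain ⟨a₀, ha₀⟩ := hS.exists
  set φ : ℝ → ℝ := fun b => ∫ t in a₀..b, u t with hφ
  have hφc : Continuous φ := hui.continuous_primitive a₀
  have hψc : Continuous (fun b => m b - m a₀) := (hdm.continuous).sub continuous_const
  have heq : Set.EqOn φ (fun b => m b - m a₀) {x | Integrable (fun y => q (x, y))} := by
    intro b hb
    rcases le_total a₀ b with h | h
    · have := fub_step hqi hd hpd1 ha₀ hb h
      simp only [hφ]
      rw [intervalIntegral.integral_of_le h]
      exact this
    · have := fub_step hqi hd hpd1 hb ha₀ h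
      simp only [hφ]
      rw [intervalIntegral.integral_symm, intervalIntegral.integral_of_le h, this]
      ring
  have hphys : φ = fun b => m b - m a₀ :=
    hφc.ext_on (dense_of_ae hS) hψc heq
  have hIoc_u : ∀ a b : ℝ, a ≤ b → ∫ t in Set.Ioc a b, u t = m b - m a := by
    intro a b hab
    have h1 : ∫ t in a..b, u t = φ b - φ a := by
      have := intervalIntegral.integral_add_adjacent_intervals
        (a := a₀) (b := a) (c := b) hui.intervalIntegrable hui.intervalIntegrable
      simp only [hφ]
      linarith [this]
    rw [← intervalIntegral.integral_of_le hab, h1, hphys]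
    ring
  have hIoc_g : ∀ a b : ℝ, a ≤ b → ∫ t in Set.Ioc a b, deriv m t = m b - m a := by
    intro a b hab
    rw [← intervalIntegral.integral_of_le hab]
    exact intervalIntegral.integral_deriv_eq_sub (fun t _ => hdm t) hgXi.intervalIntegrable
  exact ae_eq_of_integral_Ioc_eq hgXi hui
    (fun a b hab => by rw [hIoc_u a b hab, hIoc_g a b hab])

/-- sections of `pd1` integrate to zero (a.e.) -/
lemma pd1_section_integral_zero (hqi : Integrable q)
    (hd : ∀ y, Differentiable ℝ (fun x => q (x, y))) (hpd1 : Integrable (pd1 q)) :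
    ∀ᵐ y : ℝ, (∫ x, pd1 q (x, y)) = 0 := by
  have hvol : (volume : Measure (ℝ × ℝ)) = (volume : Measure ℝ).prod volume :=
    Measure.volume_eq_prod ..
  have hqi' : Integrable q ((volume : Measure ℝ).prod volume) := hvol ▸ hqi
  have hpd1' : Integrable (pd1 q) ((volume : Measure ℝ).prod volume) := hvol ▸ hpd1
  filter_upwards [hqi'.prod_left_ae, hpd1'.prod_left_ae] with y h1 h2
  exact integral_deriv_eq_zero (hd y) h1 h2

end XSide

section Proj
variable {q : ℝ × ℝ → ℝ}

lemma integral_pd1_mul_fst (hqi : Integrable q)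
    (hd : ∀ y, Differentiable ℝ (fun x => q (x, y)))
    (hdm : Differentiable ℝ (fun x => ∫ y, q (x, y)))
    (hpd1 : Integrable (pd1 q))
    (hgXi : Integrable (deriv (fun x => ∫ y, q (x, y))))
    {w : ℝ → ℝ} (hint : Integrable (fun z : ℝ × ℝ => pd1 q z * w z.1)) :
    ∫ z : ℝ × ℝ, pd1 q z * w z.1
      = ∫ x, deriv (fun x => ∫ y, q (x, y)) x * w x := by
  have hvol : (volume : Measure (ℝ × ℝ)) = (volume : Measure ℝ).prod volume :=
    Measure.volume_eq_prod ..
  have hint' : Integrable (fun z : ℝ × ℝ => pd1 q z * w z.1)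
      ((volume : Measure ℝ).prod volume) := hvol ▸ hint
  have h1 : ∫ z : ℝ × ℝ, pd1 q z * w z.1
      = ∫ x, ∫ y, pd1 q (x, y) * w x := by
    rw [show (∫ z : ℝ × ℝ, pd1 q z * w z.1)
        = ∫ z, pd1 q z * w z.1 ∂((volume : Measure ℝ).prod volume) from hvol ▸ rfl]
    exact integral_prod _ hint'
  have h2 : ∀ x : ℝ, (∫ y, pd1 q (x, y) * w x) = (∫ y, pd1 q (x, y)) * w x :=
    fun x => integral_mul_const _ _
  rw [h1]
  simp only [h2]
  refine integral_congr_ae ?_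
  filter_upwards [marg_deriv_ae hqi hd hdm hpd1 hgXi] with x hx
  rw [hx]

lemma integral_pd1_mul_snd (hqi : Integrable q)
    (hd : ∀ y, Differentiable ℝ (fun x => q (x, y)))
    (hpd1 : Integrable (pd1 q))
    {w : ℝ → ℝ} (hint : Integrable (fun z : ℝ × ℝ => pd1 q z * w z.2)) :
    ∫ z : ℝ × ℝ, pd1 q z * w z.2 = 0 := by
  have hvol : (volume : Measure (ℝ × ℝ)) = (volume : Measure ℝ).prod volume :=
    Measure.volume_eq_prod ..
  have hint' : Integrable (fun z : ℝ × ℝ => pd1 q z * w z.2)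
      ((volume : Measure ℝ).prod volume) := hvol ▸ hint
  have h1 : ∫ z : ℝ × ℝ, pd1 q z * w z.2
      = ∫ y, ∫ x, pd1 q (x, y) * w y := by
    rw [show (∫ z : ℝ × ℝ, pd1 q z * w z.2)
        = ∫ z, pd1 q z * w z.2 ∂((volume : Measure ℝ).prod volume) from hvol ▸ rfl]
    exact integral_prod_symm _ hint'
  have h2 : ∀ y : ℝ, (∫ x, pd1 q (x, y) * w y) = (∫ x, pd1 q (x, y)) * w y :=
    fun y => integral_mul_const _ _
  rw [h1]
  simp only [h2]
  have : ∫ y : ℝ, (∫ x, pd1 q (x, y)) * w y = ∫ y : ℝ, (0 : ℝ) := by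
    refine integral_congr_ae ?_
    filter_upwards [pd1_section_integral_zero hqi hd hpd1] with y hy
    rw [hy, zero_mul]
  rw [this, integral_zero]

end Proj

lemma integrable_mul_cross {p : ℝ × ℝ → ℝ} (h0 : ∀ z, 0 ≤ p z) {f g : ℝ × ℝ → ℝ}
    (hmeas : AEStronglyMeasurable (fun z => p z * (f z * g z)) (volume : Measure (ℝ × ℝ)))
    (hf : Integrable (fun z => p z * f z ^ 2)) (hg : Integrable (fun z => p z * g z ^ 2)) :
    Integrable (fun z => p z * (f z * g z)) := by
  refine Integrable.mono' ((hf.add hg).div_const 2) hmeas ?_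
  filter_upwards with z
  have hz := h0 z
  rw [Real.norm_eq_abs, abs_mul, abs_of_nonneg hz, abs_mul]
  have h1 : |f z| * |g z| ≤ (f z ^ 2 + g z ^ 2) / 2 := by
    nlinarith [sq_nonneg (|f z| - |g z|), sq_abs (f z), sq_abs (g z)]
  calc p z * (|f z| * |g z|) ≤ p z * ((f z ^ 2 + g z ^ 2) / 2) :=
        mul_le_mul_of_nonneg_left h1 hz
  _ = (p z * f z ^ 2 + p z * g z ^ 2) / 2 := by ring


/-- Marginal density of `X` for a joint density `p` on `ℝ²`. -/
noncomputable def margX (p : ℝ × ℝ → ℝ) (x : ℝ) : ℝ := ∫ y, p (x, y)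

/-- Marginal density of `Y` for a joint density `p` on `ℝ²`. -/
noncomputable def margY (p : ℝ × ℝ → ℝ) (y : ℝ) : ℝ := ∫ x, p (x, y)

/-- Score function `ρ = q'/q` of a density `q` on `ℝ`. -/
noncomputable def score (q : ℝ → ℝ) (x : ℝ) : ℝ := deriv q x / q x

/-- Marginal Fisher information `J = E[ρ(X)²] = ∫ q ρ²` of a density `q` on `ℝ`. -/
noncomputable def fisherInfo (q : ℝ → ℝ) : ℝ := ∫ x, q x * (score q x) ^ 2

/-- `M_{1,−1}(x,y) = (ρ⁽¹⁾(x,y) − ρ_X(x)) − (ρ⁽²⁾(x,y) − ρ_Y(y))`. -/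
noncomputable def M (p : ℝ × ℝ → ℝ) (z : ℝ × ℝ) : ℝ :=
  (score1 p z - score (margX p) z.1) - (score2 p z - score (margY p) z.2)

/-- For `(X,Y)` with a differentiable joint density with differentiable marginals, finite
`J_XX`, `J_YY`, `J_XY` and finite marginal Fisher informations,
`E[M_{1,−1}(X,Y)²] = J_XX − 2J_XY + J_YY − J(X) − J(Y) − 2E[ρ_X(X) ρ_Y(Y)]`;
in particular `J_XX − 2J_XY + J_YY ≥ J(X) + J(Y) + 2E[ρ_X(X) ρ_Y(Y)]`. -/
theorem M_squared_identity
    (p : ℝ × ℝ → ℝ) (hp : IsJointDensity p)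
    (hd1 : ∀ y, Differentiable ℝ (fun x => p (x, y)))
    (hd2 : ∀ x, Differentiable ℝ (fun y => p (x, y)))
    (hdX : Differentiable ℝ (margX p)) (hdY : Differentiable ℝ (margY p))
    (hJxx : Integrable (fun z => p z * (score1 p z) ^ 2))
    (hJyy : Integrable (fun z => p z * (score2 p z) ^ 2))
    (hJxy : Integrable (fun z => p z * (score1 p z * score2 p z)))
    (hJX : Integrable (fun x => margX p x * (score (margX p) x) ^ 2))
    (hJY : Integrable (fun y => margY p y * (score (margY p) y) ^ 2)) :
    (∫ z, p z * (M p z) ^ 2)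
        = Jxx p - 2 * Jxy p + Jyy p - fisherInfo (margX p) - fisherInfo (margY p)
          - 2 * ∫ z, p z * (score (margX p) z.1 * score (margY p) z.2)
      ∧ fisherInfo (margX p) + fisherInfo (margY p)
          + 2 * (∫ z, p z * (score (margX p) z.1 * score (margY p) z.2))
        ≤ Jxx p - 2 * Jxy p + Jyy p := by
  obtain ⟨hpm, hp0, hp1⟩ := hp
  have hvol : (volume : Measure (ℝ × ℝ)) = (volume : Measure ℝ).prod volume :=
    Measure.volume_eq_prod ..
  have hpInt : Integrable p := _root_.integrable_of_integral_eq_one hp1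
  -- measurability
  have meas_d1 : Measurable (pd1 p) := measurable_pd1 hpm hd1
  have meas_d2 : Measurable (pd2 p) := measurable_pd2 hpm hd2
  have meas_mX : Measurable (margX p) := hdX.continuous.measurable
  have meas_mY : Measurable (margY p) := hdY.continuous.measurable
  have meas_sX : Measurable (score (margX p)) := (measurable_deriv _).div meas_mX
  have meas_sY : Measurable (score (margY p)) := (measurable_deriv _).div meas_mY
  have meas_s1 : Measurable (score1 p) := meas_d1.div hpm
  have meas_s2 : Measurable (score2 p) := meas_d2.div hpm
  -- marginals
  have hmX0 : ∀ x, 0 ≤ margX p x := fun x => integral_nonneg fun y => hp0 _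
  have hmY0 : ∀ y, 0 ≤ margY p y := fun y => integral_nonneg fun x => hp0 _
  have hpInt' : Integrable p ((volume : Measure ℝ).prod volume) := hvol ▸ hpInt
  have hmXi : Integrable (margX p) := hpInt'.integral_prod_left
  have hmYi : Integrable (margY p) := hpInt'.integral_prod_right
  have hgXi : Integrable (deriv (margX p)) := deriv_integrable_of_fisher hdX hmX0 hmXi hJX
  have hgYi : Integrable (deriv (margY p)) := deriv_integrable_of_fisher hdY hmY0 hmYi hJY
  -- pointwise identities
  have hpa : ∀ z, p z * score1 p z = pd1 p z := fun z =>
    mul_score_eq (f := fun x => p (x, z.2)) (hd1 z.2) (fun x => hp0 _) z.1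
  have hpc : ∀ z, p z * score2 p z = pd2 p z := fun z =>
    mul_score_eq (f := fun y => p (z.1, y)) (hd2 z.1) (fun y => hp0 _) z.2
  have hmXs : ∀ x, margX p x * score (margX p) x = deriv (margX p) x :=
    mul_score_eq hdX hmX0
  have hmYs : ∀ y, margY p y * score (margY p) y = deriv (margY p) y :=
    mul_score_eq hdY hmY0
  have hpd1i : Integrable (pd1 p) := pd1_integrable hpm hp0 hpInt hd1 hJxx
  -- the swapped density
  have hq2m : Measurable (p ∘ Prod.swap) := hpm.comp measurable_swap
  have hq20 : ∀ z, 0 ≤ (p ∘ Prod.swap) z := fun z => hp0 _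
  have hq2i : Integrable (p ∘ Prod.swap) := integrable_swap_iff_vol.mpr hpInt
  have hd1q2 : ∀ y, Differentiable ℝ (fun x => (p ∘ Prod.swap) (x, y)) := fun y => hd2 y
  have hJ1q2 : Integrable
      (fun z => (p ∘ Prod.swap) z * (pd1 (p ∘ Prod.swap) z / (p ∘ Prod.swap) z) ^ 2) :=
    integrable_swap_iff_vol.mpr hJyy
  have hpd1q2 : Integrable (pd1 (p ∘ Prod.swap)) :=
    pd1_integrable hq2m hq20 hq2i hd1q2 hJ1q2
  have hdmq2 : Differentiable ℝ (fun x => ∫ y, (p ∘ Prod.swap) (x, y)) := hdY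
  have hgYi' : Integrable (deriv (fun x => ∫ y, (p ∘ Prod.swap) (x, y))) := hgYi
  -- Tonelli
  obtain ⟨Ib2, Vb2⟩ := tonelli_fst hpm hp0 hpInt meas_sX hJX
  obtain ⟨Id2', Vd2'⟩ := tonelli_fst hq2m hq20 hq2i meas_sY hJY
  have Id2 : Integrable (fun z : ℝ × ℝ => p z * score (margY p) z.2 ^ 2) :=
    integrable_swap_iff_vol.mp Id2'
  have Vd2 : (∫ z : ℝ × ℝ, p z * score (margY p) z.2 ^ 2) = fisherInfo (margY p) := by
    rw [← integral_swap_vol (fun z : ℝ × ℝ => p z * score (margY p) z.2 ^ 2)]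
    exact Vd2'
  have Vb2' : (∫ z : ℝ × ℝ, p z * score (margX p) z.1 ^ 2) = fisherInfo (margX p) := Vb2
  -- cross integrabilities
  have IG1 : Integrable (fun z : ℝ × ℝ => p z * (score1 p z * score (margX p) z.1)) :=
    integrable_mul_cross hp0
      ((hpm.mul (meas_s1.mul (meas_sX.comp measurable_fst))).aestronglyMeasurable) hJxx Ib2
  have IG3 : Integrable (fun z : ℝ × ℝ => p z * (score1 p z * score (margY p) z.2)) :=
    integrable_mul_cross hp0
      ((hpm.mul (meas_s1.mul (meas_sY.comp measurable_snd))).aestronglyMeasurable) hJxx Id2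
  have IG4 : Integrable (fun z : ℝ × ℝ => p z * (score2 p z * score (margX p) z.1)) :=
    integrable_mul_cross hp0
      ((hpm.mul (meas_s2.mul (meas_sX.comp measurable_fst))).aestronglyMeasurable) hJyy Ib2
  have IG5 : Integrable (fun z : ℝ × ℝ => p z * (score (margX p) z.1 * score (margY p) z.2)) :=
    integrable_mul_cross hp0
      ((hpm.mul ((meas_sX.comp measurable_fst).mul (meas_sY.comp measurable_snd))).aestronglyMeasurable)
      Ib2 Id2
  have IG6 : Integrable (fun z : ℝ × ℝ => p z * (score2 p z * score (margY p) z.2)) :=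
    integrable_mul_cross hp0
      ((hpm.mul (meas_s2.mul (meas_sY.comp measurable_snd))).aestronglyMeasurable) hJyy Id2
  -- projection identities
  have heq1 : (fun z : ℝ × ℝ => p z * (score1 p z * score (margX p) z.1))
      = fun z => pd1 p z * score (margX p) z.1 := funext fun z => by
    rw [← hpa z]; ring
  have VG1 : (∫ z : ℝ × ℝ, p z * (score1 p z * score (margX p) z.1))
      = fisherInfo (margX p) := by
    rw [show (∫ z : ℝ × ℝ, p z * (score1 p z * score (margX p) z.1))
        = ∫ z : ℝ × ℝ, pd1 p z * score (margX p) z.1 from congrArg _ heq1]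
    rw [integral_pd1_mul_fst hpInt hd1 hdX hpd1i hgXi (heq1 ▸ IG1)]
    refine integral_congr_ae (Eventually.of_forall fun x => ?_) |>.trans rfl
    show deriv (margX p) x * score (margX p) x = margX p x * score (margX p) x ^ 2
    rw [← hmXs x]; ring
  have heq3 : (fun z : ℝ × ℝ => p z * (score1 p z * score (margY p) z.2))
      = fun z => pd1 p z * score (margY p) z.2 := funext fun z => by
    rw [← hpa z]; ring
  have VG3 : (∫ z : ℝ × ℝ, p z * (score1 p z * score (margY p) z.2)) = 0 := by
    rw [show (∫ z : ℝ × ℝ, p z * (score1 p z * score (margY p) z.2))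
        = ∫ z : ℝ × ℝ, pd1 p z * score (margY p) z.2 from congrArg _ heq3]
    exact integral_pd1_mul_snd hpInt hd1 hpd1i (heq3 ▸ IG3)
  have heq4 : (fun z : ℝ × ℝ => p z * (score2 p z * score (margX p) z.1))
      = fun z => pd2 p z * score (margX p) z.1 := funext fun z => by
    rw [← hpc z]; ring
  have hg2 : Integrable (fun z : ℝ × ℝ => pd1 (p ∘ Prod.swap) z * score (margX p) z.2) :=
    (integrable_swap_iff_vol
      (f := fun z : ℝ × ℝ => pd2 p z * score (margX p) z.1)).mpr (heq4 ▸ IG4)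
  have VG4 : (∫ z : ℝ × ℝ, p z * (score2 p z * score (margX p) z.1)) = 0 := by
    rw [show (∫ z : ℝ × ℝ, p z * (score2 p z * score (margX p) z.1))
        = ∫ z : ℝ × ℝ, pd2 p z * score (margX p) z.1 from congrArg _ heq4]
    have hswap : (∫ z : ℝ × ℝ, pd2 p z * score (margX p) z.1)
        = ∫ z : ℝ × ℝ, pd1 (p ∘ Prod.swap) z * score (margX p) z.2 :=
      integral_swap_vol (fun z : ℝ × ℝ => pd1 (p ∘ Prod.swap) z * score (margX p) z.2)
    rw [hswap]
    exact integral_pd1_mul_snd hq2i hd1q2 hpd1q2 hg2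
  have heq6 : (fun z : ℝ × ℝ => p z * (score2 p z * score (margY p) z.2))
      = fun z => pd2 p z * score (margY p) z.2 := funext fun z => by
    rw [← hpc z]; ring
  have hg6 : Integrable (fun z : ℝ × ℝ => pd1 (p ∘ Prod.swap) z * score (margY p) z.1) :=
    (integrable_swap_iff_vol
      (f := fun z : ℝ × ℝ => pd2 p z * score (margY p) z.2)).mpr (heq6 ▸ IG6)
  have VG6 : (∫ z : ℝ × ℝ, p z * (score2 p z * score (margY p) z.2))
      = fisherInfo (margY p) := by
    rw [show (∫ z : ℝ × ℝ, p z * (score2 p z * score (margY p) z.2))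
        = ∫ z : ℝ × ℝ, pd2 p z * score (margY p) z.2 from congrArg _ heq6]
    have hswap : (∫ z : ℝ × ℝ, pd2 p z * score (margY p) z.2)
        = ∫ z : ℝ × ℝ, pd1 (p ∘ Prod.swap) z * score (margY p) z.1 :=
      integral_swap_vol (fun z : ℝ × ℝ => pd1 (p ∘ Prod.swap) z * score (margY p) z.1)
    rw [hswap]
    rw [integral_pd1_mul_fst hq2i hd1q2 hdmq2 hpd1q2 hgYi' hg6]
    refine integral_congr_ae (Eventually.of_forall fun y => ?_) |>.trans rfl
    show deriv (margY p) y * score (margY p) y = margY p y * score (margY p) y ^ 2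
    rw [← hmYs y]; ring
  -- expansion
  have key : (fun z : ℝ × ℝ => p z * (M p z) ^ 2)
      = fun z : ℝ × ℝ =>
        (p z * (score1 p z) ^ 2 + p z * score (margX p) z.1 ^ 2
          + p z * (score2 p z) ^ 2 + p z * score (margY p) z.2 ^ 2
          + 2 * (p z * (score1 p z * score (margY p) z.2))
          + 2 * (p z * (score2 p z * score (margX p) z.1)))
        - (2 * (p z * (score1 p z * score (margX p) z.1))
          + 2 * (p z * (score1 p z * score2 p z))
          + 2 * (p z * (score (margX p) z.1 * score (margY p) z.2))
          + 2 * (p z * (score2 p z * score (margY p) z.2))) := by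
    funext z
    simp only [M]
    ring
  have IP2 : Integrable (fun z : ℝ × ℝ => p z * (score1 p z) ^ 2
      + p z * score (margX p) z.1 ^ 2) := hJxx.add Ib2
  have IP3 : Integrable (fun z : ℝ × ℝ => p z * (score1 p z) ^ 2
      + p z * score (margX p) z.1 ^ 2 + p z * (score2 p z) ^ 2) := IP2.add hJyy
  have IP4 : Integrable (fun z : ℝ × ℝ => p z * (score1 p z) ^ 2
      + p z * score (margX p) z.1 ^ 2 + p z * (score2 p z) ^ 2
      + p z * score (margY p) z.2 ^ 2) := IP3.add Id2
  have IG3' : Integrable (fun z : ℝ × ℝ =>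
      2 * (p z * (score1 p z * score (margY p) z.2))) := IG3.const_mul 2
  have IG4' : Integrable (fun z : ℝ × ℝ =>
      2 * (p z * (score2 p z * score (margX p) z.1))) := IG4.const_mul 2
  have IG1' : Integrable (fun z : ℝ × ℝ =>
      2 * (p z * (score1 p z * score (margX p) z.1))) := IG1.const_mul 2
  have IG2' : Integrable (fun z : ℝ × ℝ =>
      2 * (p z * (score1 p z * score2 p z))) := hJxy.const_mul 2
  have IG5' : Integrable (fun z : ℝ × ℝ =>
      2 * (p z * (score (margX p) z.1 * score (margY p) z.2))) := IG5.const_mul 2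
  have IG6' : Integrable (fun z : ℝ × ℝ =>
      2 * (p z * (score2 p z * score (margY p) z.2))) := IG6.const_mul 2
  have IP5 : Integrable (fun z : ℝ × ℝ => p z * (score1 p z) ^ 2
      + p z * score (margX p) z.1 ^ 2 + p z * (score2 p z) ^ 2
      + p z * score (margY p) z.2 ^ 2
      + 2 * (p z * (score1 p z * score (margY p) z.2))) := IP4.add IG3'
  have IposA : Integrable (fun z : ℝ × ℝ => p z * (score1 p z) ^ 2
      + p z * score (margX p) z.1 ^ 2 + p z * (score2 p z) ^ 2
      + p z * score (margY p) z.2 ^ 2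
      + 2 * (p z * (score1 p z * score (margY p) z.2))
      + 2 * (p z * (score2 p z * score (margX p) z.1))) := IP5.add IG4'
  have IN2 : Integrable (fun z : ℝ × ℝ =>
      2 * (p z * (score1 p z * score (margX p) z.1))
      + 2 * (p z * (score1 p z * score2 p z))) := IG1'.add IG2'
  have IN3 : Integrable (fun z : ℝ × ℝ =>
      2 * (p z * (score1 p z * score (margX p) z.1))
      + 2 * (p z * (score1 p z * score2 p z))
      + 2 * (p z * (score (margX p) z.1 * score (margY p) z.2))) := IN2.add IG5'
  have InegA : Integrable (fun z : ℝ × ℝ =>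
      2 * (p z * (score1 p z * score (margX p) z.1))
      + 2 * (p z * (score1 p z * score2 p z))
      + 2 * (p z * (score (margX p) z.1 * score (margY p) z.2))
      + 2 * (p z * (score2 p z * score (margY p) z.2))) := IN3.add IG6'
  have main : (∫ z, p z * (M p z) ^ 2)
      = Jxx p - 2 * Jxy p + Jyy p - fisherInfo (margX p) - fisherInfo (margY p)
        - 2 * ∫ z, p z * (score (margX p) z.1 * score (margY p) z.2) := by
    rw [show (∫ z, p z * (M p z) ^ 2) = _ from congrArg _ key]
    rw [integral_sub IposA InegA]
    rw [integral_add IP5 IG4']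
    rw [integral_add IP4 IG3']
    rw [integral_add IP3 Id2]
    rw [integral_add IP2 hJyy]
    rw [integral_add hJxx Ib2]
    rw [integral_add IN3 IG6']
    rw [integral_add IN2 IG5']
    rw [integral_add IG1' IG2']
    rw [integral_const_mul, integral_const_mul, integral_const_mul, integral_const_mul,
      integral_const_mul, integral_const_mul]
    rw [Vb2', Vd2, VG1, VG3, VG4, VG6]
    have hJxxv : (∫ z : ℝ × ℝ, p z * (score1 p z) ^ 2) = Jxx p := rfl
    have hJyyv : (∫ z : ℝ × ℝ, p z * (score2 p z) ^ 2) = Jyy p := rfl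
    have hJxyv : (∫ z : ℝ × ℝ, p z * (score1 p z * score2 p z)) = Jxy p := rfl
    rw [hJxxv, hJyyv, hJxyv]
    ring
  refine ⟨main, ?_⟩
  have hnn : 0 ≤ ∫ z, p z * (M p z) ^ 2 :=
    integral_nonneg fun z => mul_nonneg (hp0 z) (sq_nonneg _)
  linarith [main, hnn]
end

section
/- Let (X,Y) have a joint density on ℝ² and suppose (X,Y) is positively associated (FKG: Cov(f(X), g(Y)) ≥ 0 for all bounded increasing functions f, g) and that the marginal densities p_X and p_Y are log-concave and differentiable with finite Fisher informations. Then E[ρ_X(X) ρ_Y(Y)] ≥ 0. -/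
open MeasureTheory Real Filter Set Topology

noncomputable def clampR (n t : ℝ) : ℝ := max (-n) (min n t)

lemma clampR_abs_le {n : ℝ} (hn : 0 ≤ n) (t : ℝ) : |clampR n t| ≤ n := by
  rw [abs_le]
  constructor
  · exact le_max_left _ _
  · exact max_le (by linarith) ((min_le_left _ _))

lemma clampR_abs_le_abs {n : ℝ} (hn : 0 ≤ n) (t : ℝ) : |clampR n t| ≤ |t| := by
  unfold clampR
  rcases le_or_gt 0 t with h | h
  · rw [abs_of_nonneg h, abs_of_nonneg (le_max_of_le_right (le_min hn h))]
    exact max_le (by linarith) (min_le_right _ _)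
  · rw [min_eq_right (by linarith), abs_of_neg h, abs_of_nonpos (max_le (by linarith) h.le)]
    exact neg_le_neg (le_max_right _ _)

lemma clampR_mono (n : ℝ) : Monotone (clampR n) :=
  fun _ _ h => max_le_max le_rfl (min_le_min le_rfl h)

lemma tendsto_clampR (t : ℝ) : Tendsto (fun n : ℕ => clampR n t) atTop (𝓝 t) := by
  have : ∀ᶠ n : ℕ in atTop, clampR n t = t := by
    filter_upwards [eventually_ge_atTop ⌈|t|⌉₊] with n hn
    have h1 : |t| ≤ (n : ℝ) := le_trans (Nat.le_ceil _) (by exact_mod_cast hn)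
    have h2 := abs_le.1 h1
    unfold clampR
    rw [min_eq_right h2.2, max_eq_right h2.1]
  exact Tendsto.congr' (this.mono fun n h => h.symm) tendsto_const_nhds

open Classical in
noncomputable def truncF (S : Set ℝ) (ρ : ℝ → ℝ) (n : ℝ) (x : ℝ) : ℝ :=
  if x ∈ S then clampR n (ρ x) else if ∃ s ∈ S, x < s then -n else n

lemma truncF_mem {S : Set ℝ} {ρ : ℝ → ℝ} {n x : ℝ} (hx : x ∈ S) :
    truncF S ρ n x = clampR n (ρ x) := by simp [truncF, hx]

lemma truncF_abs_le {S : Set ℝ} {ρ : ℝ → ℝ} {n : ℝ} (hn : 0 ≤ n) (x : ℝ) :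
    |truncF S ρ n x| ≤ n := by
  unfold truncF
  split_ifs with h1 h2
  · exact clampR_abs_le hn _
  · rw [abs_neg, abs_of_nonneg hn]
  · rw [abs_of_nonneg hn]

lemma truncF_monotone {S : Set ℝ} {ρ : ℝ → ℝ} {n : ℝ} (hS : Convex ℝ S)
    (hρ : MonotoneOn ρ S) (hn : 0 ≤ n) : Monotone (truncF S ρ n) := by
  have hb : ∀ t, -n ≤ clampR n t := fun t => le_max_left _ _
  have hb' : ∀ t, clampR n t ≤ n := fun t => max_le (by linarith) (min_le_left _ _)
  intro a b hab
  unfold truncF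
  by_cases ha : a ∈ S <;> by_cases hbS : b ∈ S
  · rw [if_pos ha, if_pos hbS]
    exact clampR_mono n (hρ ha hbS hab)
  · rw [if_pos ha, if_neg hbS]
    have : ¬∃ s ∈ S, b < s := by
      rintro ⟨s, hs, hbs⟩
      exact hbS (hS.ordConnected.out ha hs ⟨hab, hbs.le⟩)
    rw [if_neg this]
    exact hb' _
  · rw [if_neg ha, if_pos hbS]
    have hab' : a < b := lt_of_le_of_ne hab (by rintro rfl; exact ha hbS)
    rw [if_pos ⟨b, hbS, hab'⟩]
    exact hb _
  · rw [if_neg ha, if_neg hbS]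
    by_cases h2 : ∃ s ∈ S, a < s
    · rw [if_pos h2]
      split_ifs <;> linarith
    · rw [if_neg h2]
      have : ¬∃ s ∈ S, b < s := by
        rintro ⟨s, hs, hbs⟩
        exact h2 ⟨s, hs, lt_of_le_of_lt hab hbs⟩
      rw [if_neg this]

lemma truncF_measurable {S : Set ℝ} {ρ : ℝ → ℝ} {n : ℝ} (hS : IsOpen S)
    (hρ : Measurable ρ) : Measurable (truncF S ρ n) := by
  have hT : IsOpen {x : ℝ | ∃ s ∈ S, x < s} := by
    have : {x : ℝ | ∃ s ∈ S, x < s} = ⋃ s ∈ S, Iio s := by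
      ext x; simp [mem_iUnion]
    rw [this]
    exact isOpen_biUnion fun s _ => isOpen_Iio
  have h1 : Measurable fun x => clampR n (ρ x) :=
    (measurable_const.max (measurable_const.min hρ))
  exact Measurable.ite hS.measurableSet h1
    (Measurable.ite hT.measurableSet measurable_const measurable_const)

section OneDim
variable {q : ℝ → ℝ}

lemma deriv_eq_zero_of_zero (hnn : ∀ x, 0 ≤ q x) (hd : Differentiable ℝ q)
    {x : ℝ} (hx : q x = 0) : deriv q x = 0 := by
  have : IsLocalMin q x := Filter.Eventually.of_forall fun y => hx ▸ hnn y
  exact this.deriv_eq_zero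

lemma mul_score_eq_deriv (hnn : ∀ x, 0 ≤ q x) (hd : Differentiable ℝ q) (x : ℝ) :
    q x * score q x = deriv q x := by
  rcases eq_or_lt_of_le (hnn x) with h | h
  · rw [score, ← h, deriv_eq_zero_of_zero hnn hd (h.symm)]
    ring
  · rw [score]
    field_simp

lemma integrable_deriv_of_J (hnn : ∀ x, 0 ≤ q x) (hd : Differentiable ℝ q)
    (hint : Integrable q) (hJ : Integrable (fun x => q x * (score q x) ^ 2)) :
    Integrable (deriv q) := by
  refine Integrable.mono' (hint.add hJ) (measurable_deriv q).aestronglyMeasurable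
    (Filter.Eventually.of_forall fun x => ?_)
  rw [← mul_score_eq_deriv hnn hd x]
  have h1 : ‖q x * score q x‖ = q x * |score q x| := by
    rw [Real.norm_eq_abs, abs_mul, abs_of_nonneg (hnn x)]
  rw [h1]
  simp only [Pi.add_apply]
  have := hnn x
  nlinarith [sq_nonneg (|score q x| - 1), sq_abs (score q x), abs_nonneg (score q x)]

lemma integral_mul_score_eq_zero (hnn : ∀ x, 0 ≤ q x) (hd : Differentiable ℝ q)
    (hint : Integrable q) (hJ : Integrable (fun x => q x * (score q x) ^ 2)) :
    ∫ x, q x * score q x = 0 := by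
  have : (fun x => q x * score q x) = deriv q := funext (mul_score_eq_deriv hnn hd)
  rw [this]
  exact integral_eq_zero_of_hasDerivAt_of_integrable (fun x => (hd x).hasDerivAt)
    (integrable_deriv_of_J hnn hd hint hJ) hint

lemma score_antitoneOn (hd : Differentiable ℝ q)
    (hlc : ConcaveOn ℝ {x | 0 < q x} (fun x => Real.log (q x))) :
    AntitoneOn (score q) {x | 0 < q x} := by
  have hda : ∀ x ∈ {x | 0 < q x}, DifferentiableAt ℝ (fun x => Real.log (q x)) x :=
    fun x hx => (hd x).log (ne_of_gt hx)
  have h := hlc.antitoneOn_deriv hda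
  intro a ha b hb hab
  have ea : deriv (fun x => Real.log (q x)) a = score q a :=
    (((hd a).hasDerivAt.log (ne_of_gt ha)).deriv)
  have eb : deriv (fun x => Real.log (q x)) b = score q b :=
    (((hd b).hasDerivAt.log (ne_of_gt hb)).deriv)
  rw [← ea, ← eb]
  exact h ha hb hab

end OneDim


lemma marginal_tendsto {q : ℝ → ℝ} (hnn : ∀ x, 0 ≤ q x) (hd : Differentiable ℝ q)
    (hint : Integrable q) (hJ : Integrable (fun x => q x * (score q x) ^ 2)) :
    Tendsto (fun n : ℕ => ∫ x, q x * truncF {x | 0 < q x} (fun x => -(score q x)) n x)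
      atTop (𝓝 0) := by
  have hsm : Measurable (score q) := (measurable_deriv _).div hd.continuous.measurable
  have hSopen : IsOpen {x | 0 < q x} := isOpen_lt continuous_const hd.continuous
  have h0 : ∫ x, q x * (-(score q x)) = 0 := by
    simp only [mul_neg]
    rw [integral_neg, integral_mul_score_eq_zero hnn hd hint hJ, neg_zero]
  have hDCT := tendsto_integral_of_dominated_convergence (μ := volume)
    (F := fun (n : ℕ) x => q x * truncF {x | 0 < q x} (fun x => -(score q x)) n x)
    (f := fun x => q x * (-(score q x)))
    (fun x => q x + q x * score q x ^ 2)
    (fun n => (hd.continuous.measurable.mul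
      (truncF_measurable hSopen hsm.neg)).aestronglyMeasurable)
    (hint.add hJ)
    (fun n => Filter.Eventually.of_forall fun x => by
      by_cases hx : 0 < q x
      · have h1 : |truncF {x | 0 < q x} (fun x => -(score q x)) (n : ℝ) x| ≤ |score q x| := by
          rw [truncF_mem (show x ∈ {x | 0 < q x} from hx)]
          simpa using clampR_abs_le_abs (Nat.cast_nonneg n) (-(score q x))
        rw [norm_eq_abs, abs_mul, abs_of_nonneg (hnn x)]
        show _ ≤ q x + q x * score q x ^ 2
        nlinarith [hnn x, h1, sq_nonneg (|score q x| - 1), sq_abs (score q x),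
          abs_nonneg (truncF {x | 0 < q x} (fun x => -(score q x)) (n : ℝ) x)]
      · have hq0 : q x = 0 := le_antisymm (not_lt.1 hx) (hnn x)
        simp [hq0])
    (Filter.Eventually.of_forall fun x => by
      by_cases hx : 0 < q x
      · exact ((tendsto_clampR (-(score q x))).const_mul (q x)).congr
          (fun n => by
            show q x * clampR (n : ℝ) (-(score q x))
              = q x * truncF {x | 0 < q x} (fun x => -(score q x)) (n : ℝ) x
            rw [truncF_mem (show x ∈ {x | 0 < q x} from hx)])
      · have hq0 : q x = 0 := le_antisymm (not_lt.1 hx) (hnn x)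
        simp only [hq0, zero_mul]
        exact tendsto_const_nhds)
  rwa [h0] at hDCT


lemma ae_marg_zero {p : ℝ × ℝ → ℝ} (hpm : Measurable p) (hnn : ∀ z, 0 ≤ p z)
    (hpInt : Integrable p ((volume : Measure ℝ).prod volume)) {q : ℝ → ℝ}
    (hqc : Continuous q) (hq : ∀ x, q x = ∫ y, p (x, y)) :
    ∀ᵐ z : ℝ × ℝ ∂((volume : Measure ℝ).prod volume), q z.1 = 0 → p z = 0 := by
  have hmeasN : MeasurableSet {z : ℝ × ℝ | q z.1 = 0 ∧ p z ≠ 0} := by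
    have h2 : MeasurableSet {z : ℝ × ℝ | q z.1 = 0} :=
      (hqc.measurable.comp measurable_fst) (measurableSet_singleton 0)
    have h3 : MeasurableSet {z : ℝ × ℝ | p z ≠ 0} := (hpm (measurableSet_singleton 0)).compl
    exact h2.inter h3
  rw [ae_iff]
  have hset : {z : ℝ × ℝ | ¬(q z.1 = 0 → p z = 0)} = {z : ℝ × ℝ | q z.1 = 0 ∧ p z ≠ 0} := by
    ext z; simp
  rw [hset, Measure.measure_prod_null hmeasN]
  filter_upwards [hpInt.prod_right_ae] with x hx
  by_cases h0 : q x = 0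
  · have hae : ∀ᵐ y, p (x, y) = 0 := by
      have h1 : ∫ y, p (x, y) = 0 := (hq x).symm.trans h0
      exact (integral_eq_zero_iff_of_nonneg_ae
        (Filter.Eventually.of_forall fun y => hnn (x, y)) hx).1 h1
    show volume (Prod.mk x ⁻¹' {z : ℝ × ℝ | q z.1 = 0 ∧ p z ≠ 0}) = 0
    refine measure_mono_null (fun y hy => ?_) (ae_iff.1 hae)
    exact hy.2
  · show volume (Prod.mk x ⁻¹' {z : ℝ × ℝ | q z.1 = 0 ∧ p z ≠ 0}) = 0
    have : Prod.mk x ⁻¹' {z : ℝ × ℝ | q z.1 = 0 ∧ p z ≠ 0} = ∅ := by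
      ext y; simp [h0]
    rw [this, measure_empty]

lemma joint_score_sq_integrable {p : ℝ × ℝ → ℝ} (hpm : Measurable p) (hnn : ∀ z, 0 ≤ p z)
    (hpInt : Integrable p ((volume : Measure ℝ).prod volume)) {q : ℝ → ℝ} {s : ℝ → ℝ}
    (hsm : Measurable s) (hq : ∀ x, q x = ∫ y, p (x, y))
    (hJ : Integrable (fun x => q x * (s x) ^ 2)) :
    Integrable (fun z : ℝ × ℝ => p z * (s z.1) ^ 2) ((volume : Measure ℝ).prod volume) := by
  have hm : AEStronglyMeasurable (fun z : ℝ × ℝ => p z * (s z.1) ^ 2)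
      ((volume : Measure ℝ).prod volume) :=
    (hpm.mul ((hsm.comp measurable_fst).pow_const 2)).aestronglyMeasurable
  refine (integrable_prod_iff hm).2 ⟨?_, ?_⟩
  · filter_upwards [hpInt.prod_right_ae] with x hx
    exact hx.mul_const _
  · refine hJ.congr ?_
    filter_upwards [hpInt.prod_right_ae] with x hx
    have h1 : ∀ y, ‖p (x, y) * s x ^ 2‖ = p (x, y) * s x ^ 2 := fun y => by
      rw [Real.norm_eq_abs, abs_of_nonneg (mul_nonneg (hnn _) (sq_nonneg _))]
    calc q x * s x ^ 2 = (∫ y, p (x, y)) * s x ^ 2 := by rw [hq]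
    _ = ∫ y, p (x, y) * s x ^ 2 := (integral_mul_const _ _).symm
    _ = ∫ y, ‖p (x, y) * s x ^ 2‖ := by
        exact integral_congr_ae (Filter.Eventually.of_forall fun y => (h1 y).symm)


/-- If `(X,Y)` with joint density `p` is positively associated (FKG: for all bounded
increasing `f`, `g` one has `Cov(f(X), g(Y)) ≥ 0`) and the marginal densities are
log-concave and differentiable with finite Fisher informations, then
`E[ρ_X(X) ρ_Y(Y)] ≥ 0`. -/
theorem score_product_nonneg_of_FKG_logConcave
    (p : ℝ × ℝ → ℝ) (hp : IsJointDensity p)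
    (hFKG : ∀ f g : ℝ → ℝ, Monotone f → Monotone g →
      (∃ M, ∀ x, |f x| ≤ M) → (∃ M, ∀ x, |g x| ≤ M) →
      0 ≤ (∫ z, p z * (f z.1 * g z.2))
        - (∫ x, margX p x * f x) * (∫ y, margY p y * g y))
    (hdX : Differentiable ℝ (margX p)) (hdY : Differentiable ℝ (margY p))
    (hlcX : ConcaveOn ℝ {x | 0 < margX p x} (fun x => Real.log (margX p x)))
    (hlcY : ConcaveOn ℝ {y | 0 < margY p y} (fun y => Real.log (margY p y)))
    (hJX : Integrable (fun x => margX p x * (score (margX p) x) ^ 2))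
    (hJY : Integrable (fun y => margY p y * (score (margY p) y) ^ 2)) :
    0 ≤ ∫ z, p z * (score (margX p) z.1 * score (margY p) z.2) := by
  obtain ⟨hpm, hpnn, hpint1⟩ := hp
  -- p is integrable
  have hpInt : Integrable p := by
    by_contra h
    rw [integral_undef h] at hpint1
    exact one_ne_zero hpint1.symm
  have hpInt' : Integrable p ((volume : Measure ℝ).prod volume) := by
    rwa [← Measure.volume_eq_prod]
  -- basic facts about marginals
  have hqXnn : ∀ x, 0 ≤ margX p x := fun x => integral_nonneg fun y => hpnn (x, y)
  have hqYnn : ∀ y, 0 ≤ margY p y := fun y => integral_nonneg fun x => hpnn (x, y)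
  have hqXint : Integrable (margX p) := hpInt'.integral_prod_left
  have hqYint : Integrable (margY p) := hpInt'.integral_prod_right
  have hρXm : Measurable (score (margX p)) :=
    (measurable_deriv _).div hdX.continuous.measurable
  have hρYm : Measurable (score (margY p)) :=
    (measurable_deriv _).div hdY.continuous.measurable
  have hSXopen : IsOpen {x | 0 < margX p x} := isOpen_lt continuous_const hdX.continuous
  have hSYopen : IsOpen {y | 0 < margY p y} := isOpen_lt continuous_const hdY.continuous
  have keyX : ∫ x, margX p x * score (margX p) x = 0 :=
    integral_mul_score_eq_zero hqXnn hdX hqXint hJX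
  have keyY : ∫ y, margY p y * score (margY p) y = 0 :=
    integral_mul_score_eq_zero hqYnn hdY hqYint hJY
  have monoX : MonotoneOn (fun x => -(score (margX p) x)) {x | 0 < margX p x} :=
    fun a ha b hb hab => neg_le_neg (score_antitoneOn hdX hlcX ha hb hab)
  have monoY : MonotoneOn (fun y => -(score (margY p) y)) {y | 0 < margY p y} :=
    fun a ha b hb hab => neg_le_neg (score_antitoneOn hdY hlcY ha hb hab)
  -- the truncated score functions
  set fn : ℕ → ℝ → ℝ :=
    fun n => truncF {x | 0 < margX p x} (fun x => -(score (margX p) x)) n with hfn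
  set gn : ℕ → ℝ → ℝ :=
    fun n => truncF {y | 0 < margY p y} (fun y => -(score (margY p) y)) n with hgn
  have hfmono : ∀ n : ℕ, Monotone (fn n) :=
    fun n => truncF_monotone hlcX.1 monoX (Nat.cast_nonneg n)
  have hgmono : ∀ n : ℕ, Monotone (gn n) :=
    fun n => truncF_monotone hlcY.1 monoY (Nat.cast_nonneg n)
  have hfbd : ∀ n : ℕ, ∀ x, |fn n x| ≤ (n : ℝ) :=
    fun n => truncF_abs_le (Nat.cast_nonneg n)
  have hgbd : ∀ n : ℕ, ∀ y, |gn n y| ≤ (n : ℝ) :=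
    fun n => truncF_abs_le (Nat.cast_nonneg n)
  have hfmeas : ∀ n : ℕ, Measurable (fn n) :=
    fun n => truncF_measurable hSXopen hρXm.neg
  have hgmeas : ∀ n : ℕ, Measurable (gn n) :=
    fun n => truncF_measurable hSYopen hρYm.neg
  -- FKG applied to the truncations
  have hcov : ∀ n : ℕ, 0 ≤ (∫ z, p z * (fn n z.1 * gn n z.2))
      - (∫ x, margX p x * fn n x) * (∫ y, margY p y * gn n y) :=
    fun n => hFKG (fn n) (gn n) (hfmono n) (hgmono n) ⟨n, hfbd n⟩ ⟨n, hgbd n⟩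
  -- marginal limits
  have hA : Tendsto (fun n : ℕ => ∫ x, margX p x * fn n x) atTop (𝓝 0) :=
    marginal_tendsto hqXnn hdX hqXint hJX
  have hB : Tendsto (fun n : ℕ => ∫ y, margY p y * gn n y) atTop (𝓝 0) :=
    marginal_tendsto hqYnn hdY hqYint hJY
  -- a.e. vanishing of `p` where the marginals vanish
  have hNX : ∀ᵐ z : ℝ × ℝ, margX p z.1 = 0 → p z = 0 := by
    rw [Measure.volume_eq_prod]
    exact ae_marg_zero hpm hpnn hpInt' hdX.continuous (fun x => rfl)
  have hNY : ∀ᵐ z : ℝ × ℝ, margY p z.2 = 0 → p z = 0 := by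
    rw [Measure.volume_eq_prod]
    have hswap := ae_marg_zero (p := p ∘ Prod.swap) (hpm.comp measurable_swap)
      (fun z => hpnn _) hpInt'.swap hdY.continuous (fun y => rfl)
    refine ((Measure.measurePreserving_swap.quasiMeasurePreserving.ae hswap).mono fun z hz => hz)
  -- joint integrability of the dominating functions
  have hDX : Integrable (fun z : ℝ × ℝ => p z * (score (margX p) z.1) ^ 2) := by
    rw [Measure.volume_eq_prod]
    exact joint_score_sq_integrable hpm hpnn hpInt' hρXm (fun x => rfl) hJX
  have hDY : Integrable (fun z : ℝ × ℝ => p z * (score (margY p) z.2) ^ 2) := by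
    rw [Measure.volume_eq_prod]
    have h1 := joint_score_sq_integrable (p := p ∘ Prod.swap) (hpm.comp measurable_swap)
      (fun z => hpnn _) hpInt'.swap hρYm (fun y => rfl) hJY
    exact h1.swap
  -- dominated convergence for the joint integral
  have hC : Tendsto (fun n : ℕ => ∫ z, p z * (fn n z.1 * gn n z.2)) atTop
      (𝓝 (∫ z, p z * (score (margX p) z.1 * score (margY p) z.2))) := by
    refine tendsto_integral_of_dominated_convergence
      (fun z => p z * (score (margX p) z.1) ^ 2 + p z * (score (margY p) z.2) ^ 2)
      (fun n => (hpm.mul (((hfmeas n).comp measurable_fst).mul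
        ((hgmeas n).comp measurable_snd))).aestronglyMeasurable)
      (hDX.add hDY) ?_ ?_
    · intro n
      filter_upwards [hNX, hNY] with z hx hy
      by_cases hp0 : p z = 0
      · simp [hp0]
      · have h1 : 0 < margX p z.1 := lt_of_le_of_ne (hqXnn _) (Ne.symm fun h => hp0 (hx h))
        have h2 : 0 < margY p z.2 := lt_of_le_of_ne (hqYnn _) (Ne.symm fun h => hp0 (hy h))
        have hf1 : |fn n z.1| ≤ |score (margX p) z.1| := by
          simp only [hfn]
          rw [truncF_mem (show z.1 ∈ {x | 0 < margX p x} from h1)]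
          simpa using clampR_abs_le_abs (Nat.cast_nonneg n) (-(score (margX p) z.1))
        have hg1 : |gn n z.2| ≤ |score (margY p) z.2| := by
          simp only [hgn]
          rw [truncF_mem (show z.2 ∈ {y | 0 < margY p y} from h2)]
          simpa using clampR_abs_le_abs (Nat.cast_nonneg n) (-(score (margY p) z.2))
        have hpz := hpnn z
        have h3 : |fn n z.1| * |gn n z.2| ≤ |score (margX p) z.1| * |score (margY p) z.2| :=
          mul_le_mul hf1 hg1 (abs_nonneg _) (abs_nonneg _)
        have h4 : |score (margX p) z.1| * |score (margY p) z.2|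
            ≤ (score (margX p) z.1) ^ 2 + (score (margY p) z.2) ^ 2 := by
          nlinarith [sq_nonneg (|score (margX p) z.1| - |score (margY p) z.2|),
            sq_abs (score (margX p) z.1), sq_abs (score (margY p) z.2),
            mul_nonneg (abs_nonneg (score (margX p) z.1)) (abs_nonneg (score (margY p) z.2))]
        calc ‖p z * (fn n z.1 * gn n z.2)‖
            = p z * (|fn n z.1| * |gn n z.2|) := by
              rw [Real.norm_eq_abs, abs_mul, abs_of_nonneg hpz, abs_mul]
          _ ≤ p z * ((score (margX p) z.1) ^ 2 + (score (margY p) z.2) ^ 2) :=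
              mul_le_mul_of_nonneg_left (h3.trans h4) hpz
          _ = p z * (score (margX p) z.1) ^ 2 + p z * (score (margY p) z.2) ^ 2 := by ring
    · filter_upwards [hNX, hNY] with z hx hy
      by_cases hp0 : p z = 0
      · have he : (fun n : ℕ => p z * (fn n z.1 * gn n z.2)) = fun _ => (0 : ℝ) :=
          funext fun n => by rw [hp0, zero_mul]
        rw [he, hp0, zero_mul]
        exact tendsto_const_nhds
      · have h1 : 0 < margX p z.1 := lt_of_le_of_ne (hqXnn _) (Ne.symm fun h => hp0 (hx h))
        have h2 : 0 < margY p z.2 := lt_of_le_of_ne (hqYnn _) (Ne.symm fun h => hp0 (hy h))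
        have hlim := ((tendsto_clampR (-(score (margX p) z.1))).mul
          (tendsto_clampR (-(score (margY p) z.2)))).const_mul (p z)
        rw [neg_mul_neg] at hlim
        refine hlim.congr fun n => ?_
        simp only [hfn, hgn]
        rw [truncF_mem (show z.1 ∈ {x | 0 < margX p x} from h1),
          truncF_mem (show z.2 ∈ {y | 0 < margY p y} from h2)]
  have hT := hC.sub (hA.mul hB)
  rw [mul_zero, sub_zero] at hT
  exact ge_of_tendsto' hT hcov
end
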